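/- arXiv:1204.4540 — 13 statements merged into one kernel-verified Lean document; each statement's English description precedes it below -/
import Mathlib

section
/- Let G be a finite abelian group. Then BO(|G|, G) = |G| + 1 if the 2-rank of G equals 1, and BO(|G|, G) = |G| otherwise. -/
/-- A finset `S` of an abelian group is `k`-barycentric if it has `k` elements
and the sum of its elements equals `k • g` for some `g ∈ S`. -/
def IsBarycentric {G : Type*} [AddCommGroup G] (k : ℕ) (S : Finset G) : Prop :=
  S.card = k ∧ ∃ g ∈ S, ∑ x ∈ S, x = k • g

/-- The `k`-th barycentric Olson constant: the smallest `ℓ` such that every subset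
of `G` with at least `ℓ` elements contains a `k`-barycentric subset. -/
noncomputable def BO (k : ℕ) (G : Type*) [AddCommGroup G] [Fintype G] : ℕ :=
  sInf {ℓ : ℕ | ∀ A : Finset G, ℓ ≤ A.card → ∃ B ⊆ A, IsBarycentric k B}

/-- The 2-rank of a finite abelian group `G`: the number of invariant factors of `G`
divisible by 2, equivalently `log₂` of the number of solutions of `2 • g = 0`. -/
noncomputable def twoRank (G : Type*) [AddCommGroup G] : ℕ :=
  Nat.log 2 (Nat.card {g : G // 2 • g = 0})

/-!
Only `G` itself has `|G|` elements, and since `|G| • g = 0` it is `|G|`-barycentric exactly when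
`∑ g = 0`. Pairing each `g` with `-g` reduces this sum to the sum over the 2-torsion subgroup `T`,
an elementary abelian 2-group of order `2 ^ r` with `r` the 2-rank. For `a ≠ 0` in `T`, the cosets
`{t, t + a}` of `{0, a}` each sum to `a`, so `∑ T = 2 ^ (r - 1) • a`, which vanishes unless `r = 1`.
-/

open Finset AddSubgroup

section ElementaryAbelian

variable {H : Type*} [AddCommGroup H]

theorem exists_card_eq_prime_pow [Fintype H] {p : ℕ} [Fact p.Prime] (hp : ∀ x : H, p • x = 0) :
    ∃ k, Fintype.card H = p ^ k := by
  let := AddCommGroup.zmodModule hp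
  exact ⟨_, by simpa using Module.card_eq_pow_finrank (K := ZMod p) (V := H)⟩

theorem mem_zmultiples_iff_of_two_nsmul_eq_zero {a : H} (ha : 2 • a = 0) {x : H} :
    x ∈ zmultiples a ↔ x = 0 ∨ x = a := by
  refine ⟨fun hx => ?_, ?_⟩
  · obtain ⟨k, rfl⟩ := mem_zmultiples_iff.mp hx
    have hk : k • a = (k % 2) • a := by
      conv_lhs => rw [← Int.emod_add_mul_ediv k 2]
      rw [add_zsmul, mul_comm, mul_zsmul, two_zsmul, ← two_nsmul, ha, zsmul_zero, add_zero]
    rcases Int.emod_two_eq_zero_or_one k with h | h <;> simp [hk, h]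
  · rintro (h | h) <;> subst h
    · exact zero_mem _
    · exact mem_zmultiples x

theorem quotientAddGroup_mk_eq_mk_iff_of_two_nsmul_eq_zero {a : H} (ha : 2 • a = 0) {r t : H} :
    (t : H ⧸ zmultiples a) = r ↔ t = r ∨ t = r + a := by
  rw [QuotientAddGroup.eq, mem_zmultiples_iff_of_two_nsmul_eq_zero ha, neg_add_eq_zero,
    neg_add_eq_iff_eq_add, eq_comm (a := t)]
  have hshift : r = t + a ↔ t = r + a := by
    constructor <;> rintro rfl <;> rw [add_assoc, ← two_nsmul, ha, add_zero]
  rw [hshift]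

variable [Fintype H]

theorem card_eq_two_mul_card_quotient_zmultiples (h2 : ∀ x : H, 2 • x = 0) {a : H} (ha : a ≠ 0) :
    Fintype.card H = 2 * Nat.card (H ⧸ zmultiples a) := by
  rw [← Nat.card_eq_fintype_card, card_eq_card_quotient_mul_card_addSubgroup,
    Nat.card_zmultiples, addOrderOf_eq_prime (h2 a) ha, mul_comm]

theorem sum_univ_eq_card_quotient_zmultiples_nsmul (h2 : ∀ x : H, 2 • x = 0) {a : H}
    (ha : a ≠ 0) : ∑ t : H, t = Nat.card (H ⧸ zmultiples a) • a := by
  classical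
  let := Fintype.ofFinite (H ⧸ zmultiples a)
  rw [← sum_fiberwise univ (QuotientAddGroup.mk : H → H ⧸ zmultiples a) (fun t : H => t),
    Nat.card_eq_fintype_card, ← card_univ, ← sum_const]
  refine sum_congr rfl fun q _ => ?_
  induction q using QuotientAddGroup.induction_on with | H r => ?_
  have hcoset : univ.filter (fun t : H => (t : H ⧸ zmultiples a) = r) = {r, r + a} := by
    ext t
    simp [quotientAddGroup_mk_eq_mk_iff_of_two_nsmul_eq_zero (h2 a)]
  rw [hcoset, sum_pair (by simpa using ha), ← add_assoc, ← two_nsmul, h2, zero_add]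

theorem sum_univ_eq_zero_iff_card_ne_two (h2 : ∀ x : H, 2 • x = 0) :
    ∑ t : H, t = 0 ↔ Fintype.card H ≠ 2 := by
  obtain ⟨k, hk⟩ := exists_card_eq_prime_pow h2
  rcases k with _ | k
  · have : Subsingleton H := Fintype.card_le_one_iff_subsingleton.mp hk.le
    simp [hk, Subsingleton.elim _ (0 : H)]
  have : Nontrivial H :=
    Fintype.one_lt_card_iff_nontrivial.mp (hk ▸ Nat.one_lt_two_pow (Nat.succ_ne_zero k))
  obtain ⟨a, ha⟩ := exists_ne (0 : H)
  have hq : Nat.card (H ⧸ zmultiples a) = 2 ^ k := by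
    have := card_eq_two_mul_card_quotient_zmultiples h2 ha
    rw [hk, pow_succ'] at this
    omega
  rw [sum_univ_eq_card_quotient_zmultiples_nsmul h2 ha, hq, hk]
  rcases k with _ | k
  · simpa using ha
  · simp [pow_succ, mul_nsmul, h2]

end ElementaryAbelian

section TwoTorsion

variable {G : Type*} [AddCommGroup G]

theorem mem_torsionBy_two {x : G} : x ∈ torsionBy G 2 ↔ 2 • x = 0 := torsionBy.nsmul_iff

theorem twoRank_eq_log_card_torsionBy_two : twoRank G = Nat.log 2 (Nat.card (torsionBy G 2)) := by
  rw [twoRank, Nat.card_congr (Equiv.subtypeEquivRight fun _ => mem_torsionBy_two.symm)]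

theorem sum_univ_eq_sum_torsionBy_two [Fintype G] [Fintype (torsionBy G 2)] :
    ∑ g : G, g = ∑ t : torsionBy G 2, (t : G) := by
  classical
  rw [← sum_filter_add_sum_filter_not univ (· ∈ torsionBy G 2),
    sum_subtype (p := (· ∈ torsionBy G 2)) _ (fun _ => by simp) (fun g : G => g)]
  have hcancel : ∑ g ∈ univ.filter (· ∉ torsionBy G 2), g = 0 := by
    refine sum_involution (fun g _ => -g) (fun g _ => add_neg_cancel g) (fun g hg _ hneg => ?_)
      (fun g hg => by simpa using hg) (fun g _ => neg_neg g)
    simp only [mem_filter, mem_univ, true_and, mem_torsionBy_two] at hg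
    exact hg (by rw [two_nsmul]; nth_rw 1 [← hneg]; exact neg_add_cancel g)
  rw [hcancel, add_zero]

theorem sum_univ_eq_zero_iff_twoRank_ne_one [Fintype G] : ∑ g : G, g = 0 ↔ twoRank G ≠ 1 := by
  classical
  have h2 : ∀ t : torsionBy G 2, 2 • t = 0 := torsionBy.nsmul
  obtain ⟨k, hk⟩ := exists_card_eq_prime_pow h2
  rw [sum_univ_eq_sum_torsionBy_two, ← AddSubmonoidClass.coe_finsetSum, ZeroMemClass.coe_eq_zero,
    sum_univ_eq_zero_iff_card_ne_two h2, twoRank_eq_log_card_torsionBy_two,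
    Nat.card_eq_fintype_card, hk, Nat.log_pow one_lt_two, ne_eq, ne_eq,
    Nat.pow_eq_self_iff one_lt_two]

end TwoTorsion

section Barycentric

variable {G : Type*} [AddCommGroup G] [Fintype G]

theorem isBarycentric_card_iff {B : Finset G} :
    IsBarycentric (Fintype.card G) B ↔ B = univ ∧ ∑ g : G, g = 0 := by
  rw [IsBarycentric, card_eq_iff_eq_univ]
  constructor
  · rintro ⟨rfl, g, -, hg⟩
    exact ⟨rfl, hg.trans card_nsmul_eq_zero⟩
  · rintro ⟨rfl, h⟩
    exact ⟨rfl, 0, mem_univ _, by rw [h, nsmul_zero]⟩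

theorem forall_exists_isBarycentric_card_iff [DecidableEq G] (ℓ : ℕ) :
    (∀ A : Finset G, ℓ ≤ #A → ∃ B ⊆ A, IsBarycentric (Fintype.card G) B) ↔
      (if ∑ g : G, g = 0 then Fintype.card G else Fintype.card G + 1) ≤ ℓ := by
  simp only [isBarycentric_card_iff]
  constructor
  · intro h
    by_contra! hlt
    obtain ⟨A, -, hA⟩ := exists_subset_card_eq (s := (univ : Finset G)) (n := ℓ)
      (by rw [card_univ]; split_ifs at hlt <;> omega)
    obtain ⟨B, hBA, rfl, hsum⟩ := h A hA.ge
    have := card_le_card hBA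
    rw [if_pos hsum, ← card_univ] at hlt
    omega
  · intro hℓ A hA
    have hAle := card_le_univ A
    split_ifs at hℓ with hsum
    · exact ⟨A, subset_rfl, (card_eq_iff_eq_univ A).mp (by omega), hsum⟩
    · omega

theorem BO_card_eq_ite_sum_eq_zero [DecidableEq G] :
    BO (Fintype.card G) G =
      if ∑ g : G, g = 0 then Fintype.card G else Fintype.card G + 1 := by
  rw [BO, Set.ext forall_exists_isBarycentric_card_iff]
  exact csInf_Ici

end Barycentric

theorem BO_card (G : Type*) [AddCommGroup G] [Fintype G] :
    BO (Fintype.card G) G =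
      if twoRank G = 1 then Fintype.card G + 1 else Fintype.card G := by
  classical
  simp only [BO_card_eq_ite_sum_eq_zero, sum_univ_eq_zero_iff_twoRank_ne_one, ne_eq, ite_not]
end

section
/- Let G be a finite abelian group with |G| ≥ 2. Then BO(|G|−1, G) = |G|−1 if the 2-rank of G equals 1, and BO(|G|−1, G) = |G|+1 otherwise. -/
/-!
Write `σ` for the sum of all elements of `G` and `n = |G|`. Since `(n - 1) • g = -g`, the set
`G \ {a}`, whose sum is `σ - a`, is `(n - 1)`-barycentric iff some `g ≠ a` has `σ - a = -g`,
i.e. iff `σ ≠ 0` (take `g = a - σ`). So `BO (n - 1) G = n - 1` when `σ ≠ 0`, while for `σ = 0`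
not even `G` itself contains a barycentric subset and `BO (n - 1) G = n + 1`.

It remains to see that `σ ≠ 0` iff the 2-torsion subgroup `G[2]` has order 2, i.e. iff the 2-rank
is 1. Pairing `x` with `-x` shows that `σ` is the sum of `G[2]`, which is its nonzero element when
`|G[2]| = 2`. Conversely `σ` lies in every subgroup `K` of even order, since its image in `G ⧸ K`
is `|K|` times the sum of `G ⧸ K`, and twice a sum over a whole group vanishes; so a nonzero `σ`
is the only nonzero element of `G[2]`.
-/

open Finset AddSubgroup

section SumOfAllElements

variable (G : Type*) [AddCommGroup G] [Fintype G]

theorem two_nsmul_sum_univ_eq_zero : 2 • ∑ x : G, x = 0 := by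
  have h : ∑ x : G, -x = ∑ x : G, x := Fintype.sum_equiv (Equiv.neg G) _ _ fun _ => rfl
  rwa [sum_neg_distrib, neg_eq_iff_add_eq_zero, ← two_nsmul] at h

theorem sum_univ_mem_of_even_card (K : AddSubgroup G) (hK : Even (Nat.card K)) :
    ∑ x : G, x ∈ K := by
  classical
  obtain ⟨m, hm⟩ := hK
  rw [← QuotientAddGroup.eq_zero_iff, QuotientAddGroup.mk_sum]
  calc ∑ x : G, (x : G ⧸ K)
      = ∑ p : (G ⧸ K) × K, p.1 :=
        Fintype.sum_equiv addGroupEquivQuotientProdAddSubgroup _ _ fun _ => rfl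
    _ = (m + m) • ∑ q : G ⧸ K, q := by
        simp [Fintype.sum_prod_type, ← hm, smul_sum]
    _ = 0 := by rw [← two_mul, mul_nsmul, two_nsmul_sum_univ_eq_zero, nsmul_zero]

theorem sum_univ_eq_sum_two_torsion [DecidableEq G] :
    ∑ x : G, x = ∑ x : G with 2 • x = 0, x := by
  have h : ∑ x : G with 2 • x ≠ 0, x = 0 := by
    refine sum_involution (fun x _ => -x) (fun x _ => add_neg_cancel x) ?_ ?_
      (fun x _ => neg_neg x)
    · intro x hx _ hneg
      rw [mem_filter, two_nsmul] at hx
      exact hx.2 (by nth_rw 1 [← hneg]; exact neg_add_cancel x)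
    · intro x hx
      simpa using hx
  rw [← sum_filter_add_sum_filter_not univ (2 • · = 0), h, add_zero]

end SumOfAllElements

section TwoTorsion

variable {G : Type*} [AddCommGroup G]

theorem AddSubgroup.eq_of_card_eq_two {K : AddSubgroup G} (hK : Nat.card K = 2) {x y : G}
    (hx : x ∈ K) (hy : y ∈ K) (hx0 : x ≠ 0) (hy0 : y ≠ 0) : x = y := by
  obtain ⟨z, -, hz⟩ := (Nat.card_eq_two_iff' (0 : K)).1 hK
  have h := (hz ⟨x, hx⟩ (by simpa using hx0)).trans (hz ⟨y, hy⟩ (by simpa using hy0)).symm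
  simpa using h

theorem AddSubgroup.exists_ne_zero_of_one_lt_card {K : AddSubgroup G} [Finite K]
    (hK : 1 < Nat.card K) : ∃ a ∈ K, a ≠ 0 :=
  (bot_or_exists_ne_zero K).resolve_left ((one_lt_card_iff_ne_bot K).1 hK)

theorem card_zmultiples_of_two_nsmul {a : G} (ha : 2 • a = 0) (ha0 : a ≠ 0) :
    Nat.card (zmultiples a) = 2 := by
  rw [Nat.card_zmultiples, addOrderOf_eq_prime ha ha0]

variable (G)

theorem twoRank_eq_one_iff_card_torsionBy_two [Finite G] :
    twoRank G = 1 ↔ Nat.card (torsionBy G 2) = 2 := by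
  have hcard : Nat.card {g : G // 2 • g = 0} = Nat.card (torsionBy G 2) :=
    Nat.card_congr (Equiv.subtypeEquivRight fun _ => torsionBy.nsmul_iff.symm)
  rw [twoRank, hcard, Nat.log_eq_one_iff']
  refine ⟨fun ⟨h2, h4⟩ => ?_, fun h => by omega⟩
  obtain ⟨b, hb, hb0⟩ := exists_ne_zero_of_one_lt_card h2
  have h_even : 2 ∣ Nat.card (torsionBy G 2) := by
    rw [← card_zmultiples_of_two_nsmul (torsionBy.nsmul_iff.1 hb) hb0]
    exact card_dvd_of_le (zmultiples_le.2 hb)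
  omega

theorem sum_univ_ne_zero_iff_card_torsionBy_two [Fintype G] :
    ∑ x : G, x ≠ 0 ↔ Nat.card (torsionBy G 2) = 2 := by
  classical
  constructor
  · intro hσ
    have hσT : ∑ x : G, x ∈ torsionBy G 2 :=
      torsionBy.nsmul_iff.2 (two_nsmul_sum_univ_eq_zero G)
    refine (Nat.card_eq_two_iff' (0 : torsionBy G 2)).2 ⟨⟨_, hσT⟩, by simpa using hσ, ?_⟩
    rintro ⟨b, hb⟩ hb0
    have hb0 : b ≠ 0 := by simpa using hb0
    have hK := card_zmultiples_of_two_nsmul (torsionBy.nsmul_iff.1 hb) hb0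
    have hσK := sum_univ_mem_of_even_card G _ (hK ▸ even_two)
    simpa using eq_of_card_eq_two hK (mem_zmultiples b) hσK hb0 hσ
  · intro hT
    obtain ⟨a, ha, ha0⟩ := exists_ne_zero_of_one_lt_card (hT ▸ one_lt_two)
    have ha' : a ∈ univ.filter (2 • · = 0) := by simpa using torsionBy.nsmul_iff.1 ha
    rw [sum_univ_eq_sum_two_torsion, sum_eq_single_of_mem a ha']
    · exact ha0
    · intro x hx hxa
      by_contra hx0
      exact hxa (eq_of_card_eq_two hT (torsionBy.nsmul_iff.2 (mem_filter.1 hx).2) ha hx0 ha0)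

theorem twoRank_eq_one_iff_sum_univ_ne_zero [Fintype G] : twoRank G = 1 ↔ ∑ x : G, x ≠ 0 :=
  (twoRank_eq_one_iff_card_torsionBy_two G).trans (sum_univ_ne_zero_iff_card_torsionBy_two G).symm

end TwoTorsion

theorem Finset.exists_eq_univ_erase_of_card_eq_sub_one {α : Type*} [Fintype α] [Nonempty α]
    [DecidableEq α] {B : Finset α} (hB : #B = Fintype.card α - 1) : ∃ a, B = univ.erase a := by
  have hBc : #Bᶜ = 1 := by
    rw [card_compl, hB]
    have := Fintype.card_pos (α := α)
    omega
  obtain ⟨a, ha⟩ := card_eq_one.1 hBc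
  exact ⟨a, by rw [← compl_singleton, ← ha, compl_compl]⟩

section BarycentricOlson

variable {G : Type*} [AddCommGroup G] [Fintype G] {k : ℕ}

theorem BO_le {ℓ : ℕ} (h : ∀ A : Finset G, ℓ ≤ #A → ∃ B ⊆ A, IsBarycentric k B) :
    BO k G ≤ ℓ :=
  Nat.sInf_le h

theorem BO_le_card_add_one : BO k G ≤ Fintype.card G + 1 :=
  BO_le fun A hA => absurd (card_le_univ A) (by omega)

theorem exists_isBarycentric_subset_of_BO_le {A : Finset G} (hA : BO k G ≤ #A) :
    ∃ B ⊆ A, IsBarycentric k B :=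
  Nat.sInf_mem (s := {ℓ | ∀ A : Finset G, ℓ ≤ #A → ∃ B ⊆ A, IsBarycentric k B})
    ⟨Fintype.card G + 1, fun A hA => absurd (card_le_univ A) (by omega)⟩ A hA

theorem card_lt_BO {A : Finset G} (hA : ∀ B ⊆ A, ¬ IsBarycentric k B) : #A < BO k G :=
  lt_of_not_ge fun h => by
    obtain ⟨B, hBA, hB⟩ := exists_isBarycentric_subset_of_BO_le h
    exact hA B hBA hB

theorem le_BO (hk : k ≤ Fintype.card G + 1) : k ≤ BO k G := by
  obtain _ | k := k
  · exact Nat.zero_le _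
  obtain ⟨A, -, hA⟩ := exists_subset_card_eq (show k ≤ #(univ : Finset G) by simp; omega)
  refine hA ▸ card_lt_BO fun B hBA hB => ?_
  have := hB.1 ▸ card_le_card hBA
  omega

theorem card_sub_one_nsmul (g : G) : (Fintype.card G - 1) • g = -g := by
  rw [sub_nsmul _ Fintype.card_pos, card_nsmul_eq_zero, one_nsmul, zero_add]

theorem isBarycentric_card_sub_one_iff {B : Finset G} :
    IsBarycentric (Fintype.card G - 1) B ↔ #B = Fintype.card G - 1 ∧ ∑ x : G, x ≠ 0 := by
  classical
  refine and_congr_right fun hB => ?_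
  obtain ⟨a, rfl⟩ := exists_eq_univ_erase_of_card_eq_sub_one hB
  simp only [sum_erase_eq_sub (mem_univ a), card_sub_one_nsmul, mem_erase, mem_univ, and_true]
  constructor
  · rintro ⟨g, hga, hσ⟩ h0
    rw [h0, zero_sub, neg_inj] at hσ
    exact hga hσ.symm
  · intro h0
    exact ⟨a - ∑ x : G, x, by simpa using h0, (neg_sub _ _).symm⟩

end BarycentricOlson

theorem BO_card_sub_one_general (G : Type*) [AddCommGroup G] [Fintype G] :
    BO (Fintype.card G - 1) G =
      if twoRank G = 1 then Fintype.card G - 1 else Fintype.card G + 1 := by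
  split_ifs with hσ <;> rw [twoRank_eq_one_iff_sum_univ_ne_zero] at hσ
  · refine le_antisymm (BO_le fun A hA => ?_) (le_BO (by omega))
    obtain ⟨B, hBA, hB⟩ := exists_subset_card_eq hA
    exact ⟨B, hBA, isBarycentric_card_sub_one_iff.2 ⟨hB, hσ⟩⟩
  · refine le_antisymm BO_le_card_add_one (card_univ (α := G) ▸ card_lt_BO fun B _ hB => ?_)
    exact hσ (isBarycentric_card_sub_one_iff.1 hB).2

theorem BO_card_sub_one (G : Type*) [AddCommGroup G] [Fintype G]
    (hG : 2 ≤ Fintype.card G) :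
    BO (Fintype.card G - 1) G =
      if twoRank G = 1 then Fintype.card G - 1 else Fintype.card G + 1 :=
  BO_card_sub_one_general G
end

section
/- Let G be a finite abelian group whose 2-rank is not 1 and with exp(G) > 2, and let A = G \ {a, a'} for distinct a, a' ∈ G. Then A is (|G|−2)-barycentric if and only if a + a' ∈ 2·G. -/
/-!
The sum of all elements of `G` vanishes: elements with `2 • x ≠ 0` cancel against their
negatives, and the remaining `2`-torsion is an `𝔽₂`-vector space of dimension `≠ 1`, in which
every coordinate equals `1` on an even number (`2 ^ (r - 1)`) of vectors. Hence the complement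
of `{a, a'}` sums to `-(a + a')`, while `(|G| - 2) • g = -(2 • g)`, so the barycentric condition
reads `2 • g = a + a'`; such a `g` is automatically different from `a` and `a'`.
-/

open Finset

theorem Fintype.sum_univ_pi_eq_zero {ι M : Type*} [Fintype ι] [DecidableEq ι] [AddCommGroup M]
    [Fintype M] (hι : Fintype.card ι ≠ 1) : ∑ v : ι → M, v = 0 := by
  funext i
  have hcard : 2 ≤ Fintype.card ι := by
    have := Fintype.card_pos_iff.mpr ⟨i⟩
    omega
  obtain ⟨k, hk⟩ : Fintype.card M ∣ Fintype.card M ^ (Fintype.card ι - 1) :=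
    dvd_pow_self _ (by omega)
  calc (∑ v : ι → M, v) i
        = ∑ v ∈ Fintype.piFinset fun _ : ι => (univ : Finset M), v i := by
        rw [Finset.sum_apply, Fintype.piFinset_univ]
    _ = Fintype.card M ^ (Fintype.card ι - 1) • ∑ x : M, x :=
        Fintype.sum_piFinset_apply (fun x => x) univ i
    _ = 0 := by rw [hk, mul_nsmul', card_nsmul_eq_zero]

theorem Module.sum_univ_eq_zero_of_card_ne {K V : Type*} [DivisionRing K] [Fintype K]
    [AddCommGroup V] [Module K V] [Fintype V] (hV : Fintype.card V ≠ Fintype.card K) :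
    ∑ v : V, v = 0 := by
  let e := (Module.finBasis K V).equivFun
  have hrank : Fintype.card (Fin (Module.finrank K V)) ≠ 1 := by
    rw [Fintype.card_fin]
    rintro h
    exact hV (by rw [Module.card_eq_pow_finrank (K := K), h, pow_one])
  calc ∑ v : V, v = ∑ w, e.symm w := (e.symm.toEquiv.sum_comp _).symm
    _ = 0 := by rw [← map_sum, Fintype.sum_univ_pi_eq_zero hrank, map_zero]

theorem sum_univ_eq_sum_filter_two_nsmul_eq_zero {G : Type*} [AddCommGroup G] [Fintype G]
    [DecidableEq G] : ∑ x : G, x = ∑ x ∈ univ.filter (fun x : G => 2 • x = 0), x := by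
  have hpaired : ∑ x ∈ univ.filter (fun x : G => ¬2 • x = 0), x = 0 := by
    refine sum_involution (fun x _ => -x) (fun x _ => add_neg_cancel x) ?_ ?_
      (fun x _ => neg_neg x)
    · intro x hx _ hneg
      rw [mem_filter, two_nsmul] at hx
      exact hx.2 (neg_eq_iff_add_eq_zero.mp hneg)
    · intro x hx
      simpa using hx
  rw [← sum_filter_add_sum_filter_not univ (fun x : G => 2 • x = 0), hpaired, add_zero]

theorem sum_univ_eq_zero_of_twoRank_ne_one {G : Type*} [AddCommGroup G] [Fintype G]
    (h2 : twoRank G ≠ 1) : ∑ x : G, x = 0 := by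
  classical
  let T := AddSubgroup.torsionBy G (2 : ℕ)
  let _ : Module (ZMod 2) T := AddSubgroup.torsionBy.zmodModule
  have hmem (x : G) : x ∈ T ↔ 2 • x = 0 := AddSubgroup.torsionBy.nsmul_iff
  have hcard : Fintype.card T ≠ Fintype.card (ZMod 2) := by
    rw [ZMod.card, ← Nat.card_eq_fintype_card, Nat.card_congr (Equiv.subtypeEquivRight hmem)]
    rintro h
    exact h2 (by rw [twoRank, h]; exact Nat.log_pow one_lt_two 1)
  calc ∑ x : G, x = ∑ x ∈ univ.filter (fun x : G => 2 • x = 0), x :=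
        sum_univ_eq_sum_filter_two_nsmul_eq_zero
    _ = ∑ x : T, (x : G) := sum_subtype _ (by simp [hmem]) _
    _ = 0 := by rw [← AddSubgroup.val_finsetSum, Module.sum_univ_eq_zero_of_card_ne hcard,
      ZeroMemClass.coe_zero]

theorem isBarycentric_univ_sdiff_iff {G : Type*} [AddCommGroup G] [Fintype G] [DecidableEq G]
    (hG : ∑ x : G, x = 0) (s : Finset G) :
    IsBarycentric (Fintype.card G - #s) (univ \ s) ↔ ∃ g ∉ s, #s • g = ∑ x ∈ s, x := by
  have hsum : ∑ x ∈ univ \ s, x = -∑ x ∈ s, x := by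
    rw [sum_sdiff_eq_sub (subset_univ s), hG, zero_sub]
  have hnsmul (g : G) : (Fintype.card G - #s) • g = -(#s • g) := by
    rw [sub_nsmul g (card_le_univ s), card_nsmul_eq_zero, zero_add]
  simp only [IsBarycentric, card_univ_sdiff, hsum, hnsmul, neg_inj, mem_sdiff, mem_univ, true_and,
    eq_comm (a := ∑ x ∈ s, x)]

theorem barycentric_complement_pair_general (G : Type*) [AddCommGroup G] [Fintype G]
    [DecidableEq G] (h2 : twoRank G ≠ 1)
    (a a' : G) (haa' : a ≠ a') :
    IsBarycentric (Fintype.card G - 2) (Finset.univ \ {a, a'}) ↔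
      ∃ g : G, 2 • g = a + a' := by
  have key := isBarycentric_univ_sdiff_iff (sum_univ_eq_zero_of_twoRank_ne_one h2) {a, a'}
  rw [card_pair haa', sum_pair haa'] at key
  refine key.trans ⟨fun ⟨g, _, hg⟩ => ⟨g, hg⟩, fun ⟨g, hg⟩ => ⟨g, ?_, hg⟩⟩
  rw [mem_insert, mem_singleton]
  rw [two_nsmul] at hg
  rintro (rfl | rfl)
  · exact haa' (add_left_cancel hg)
  · exact haa' (add_right_cancel hg).symm

theorem barycentric_complement_pair (G : Type*) [AddCommGroup G] [Fintype G]
    [DecidableEq G] (h2 : twoRank G ≠ 1) (hexp : 2 < AddMonoid.exponent G)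
    (a a' : G) (haa' : a ≠ a') :
    IsBarycentric (Fintype.card G - 2) (Finset.univ \ {a, a'}) ↔
      ∃ g : G, 2 • g = a + a' :=
  barycentric_complement_pair_general G h2 a a' haa'
end

section
/- Let p be a prime, A a subset of Z/pZ, and k a positive integer. Then |Σ_k(A)| ≥ min{p, k(|A| − k) + 1}, where Σ_k(A) is the set of sums of k-element subsets of A. -/
/-!
Alon–Nathanson–Ruzsa polynomial method. Suppose `Σ_k(A)` has at most `m` elements, where
`m < p` and `m ≤ k (|A| - k)`, and let `h` be a monic polynomial of degree `m` vanishing on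
`Σ_k(A)`. Then `F = h(x₁ + ⋯ + x_k) · ∏_{i<j} (x_j - x_i)` vanishes on `A^k`: at a point
with distinct coordinates the first factor vanishes, otherwise the Vandermonde factor does.
The top homogeneous part of `F` is `(x₁ + ⋯ + x_k)^m ∏_{i<j} (x_j - x_i)`, and for exponents
`c₀ < ⋯ < c_{k-1} < |A|` with `∑ cᵢ = m + k(k-1)/2` its coefficient at `x^c`, multiplied by
`∏ cᵢ!`, is `m! ∏_{i<j} (c_j - c_i)` (expand the Vandermonde determinant and recognise
`det (cᵢ.descFactorial j)`). This is nonzero modulo `p`, so Alon's Combinatorial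
Nullstellensatz on a grid `B₀ × ⋯ × B_{k-1} ⊆ A^k` with `|Bᵢ| = cᵢ + 1` yields a point of
`A^k` where `F` does not vanish, a contradiction.
-/

open Finset MvPolynomial Matrix Nat

theorem Nat.sum_range_add_div_self {k : ℕ} (hk : 0 < k) (m : ℕ) :
    ∑ i ∈ range k, (m + i) / k = m := by
  induction m with
  | zero => exact sum_eq_zero fun i hi => Nat.div_eq_of_lt (by simpa using hi)
  | succ m ih =>
    have hshift : ∑ i ∈ range k, (m + 1 + i) / k + m / k
        = ∑ i ∈ range k, (m + i) / k + (m + k) / k := by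
      rw [← sum_range_succ (fun i => (m + i) / k), sum_range_succ']
      simp only [add_zero, add_right_comm m 1, add_assoc m]
    rw [ih, Nat.add_div_right m hk] at hshift
    omega

theorem exists_strictMono_degree_eq {k n m : ℕ} (hk : 0 < k) (hkn : k ≤ n)
    (hm : m ≤ k * (n - k)) :
    ∃ c : Fin k →₀ ℕ,
      StrictMono c ∧ (∀ i, c i < n) ∧ c.degree = m + ∑ i : Fin k, (i : ℕ) := by
  refine ⟨Finsupp.equivFunOnFinite.symm fun i => i + (m + i) / k, ?_, fun i => ?_, ?_⟩
  · intro i j hij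
    have : (m + i) / k ≤ (m + j) / k := Nat.div_le_div_right (by simp; omega)
    simp only [Finsupp.coe_equivFunOnFinite_symm]
    omega
  · have : (m + i) / k < n - k + 1 := by
      rw [Nat.div_lt_iff_lt_mul hk]
      have := i.isLt
      nlinarith
    simp only [Finsupp.coe_equivFunOnFinite_symm]
    omega
  · rw [Finsupp.degree_eq_sum, add_comm m]
    simp only [Finsupp.coe_equivFunOnFinite_symm, sum_add_distrib]
    rw [Fin.sum_univ_eq_sum_range (fun i => (m + i) / k), Nat.sum_range_add_div_self hk]

theorem Matrix.det_descFactorial_eq_det_vandermonde {R : Type*} [CommRing R] [IsDomain R] {k : ℕ}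
    (c : Fin k → ℕ) :
    (of fun i j : Fin k => ((c i).descFactorial j : R)).det
      = (vandermonde fun i => (c i : R)).det := by
  rw [det_eval_matrixOfPolynomials_eq_det_vandermonde _ (fun j => descPochhammer R j)
    (fun j => descPochhammer_natDegree R j) (fun j => monic_descPochhammer R j)]
  simp [descPochhammer_eval_eq_descFactorial]

namespace MvPolynomial

variable {σ R : Type*}

section CommSemiring

variable [CommSemiring R] {f g : MvPolynomial σ R} {n D : ℕ}

theorem IsHomogeneous.totalDegree_aeval_mul_le (hf : f.IsHomogeneous n)
    (hg : g.IsHomogeneous D) (h : Polynomial R) :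
    (Polynomial.aeval f h * g).totalDegree ≤ n * h.natDegree + D := by
  rw [Polynomial.aeval_eq_sum_range, sum_mul]
  refine (totalDegree_finsetSum _ _).trans (Finset.sup_le fun i hi => ?_)
  rw [smul_mul_assoc]
  refine (totalDegree_smul_le _ _).trans (((hf.pow i).mul hg).totalDegree_le.trans ?_)
  have : i ≤ h.natDegree := Nat.lt_succ_iff.mp (mem_range.mp hi)
  gcongr

theorem IsHomogeneous.coeff_aeval_mul (hf : f.IsHomogeneous n) (hn : n ≠ 0)
    (hg : g.IsHomogeneous D) (h : Polynomial R) {d : σ →₀ ℕ}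
    (hd : d.degree = n * h.natDegree + D) :
    coeff d (Polynomial.aeval f h * g) = h.leadingCoeff * coeff d (f ^ h.natDegree * g) := by
  rw [Polynomial.aeval_eq_sum_range, sum_mul, coeff_sum,
    sum_eq_single_of_mem h.natDegree (self_mem_range_succ _)]
  · rw [smul_mul_assoc, coeff_smul, smul_eq_mul, Polynomial.leadingCoeff]
  · intro i _ hi
    rw [smul_mul_assoc, coeff_smul, ((hf.pow i).mul hg).coeff_eq_zero, smul_zero]
    rw [hd]
    intro h'
    exact hi (Nat.eq_of_mul_eq_mul_left (Nat.pos_of_ne_zero hn) (by omega)).symm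

theorem prod_factorial_mul_coeff_sum_X_pow_mul_monomial [Fintype σ] {m : ℕ}
    (c e : σ →₀ ℕ) (hce : c.degree = m + e.degree) :
    (∏ i, ((c i)! : R)) * coeff c ((∑ i, X i : MvPolynomial σ R) ^ m * monomial e 1)
      = m ! * ∏ i, ((c i).descFactorial (e i) : R) := by
  rw [coeff_mul_monomial', mul_one]
  split_ifs with hec
  · have hdeg : (c - e).degree = m := by
      have := map_add Finsupp.degree (c - e) e
      rw [tsub_add_cancel_of_le hec] at this
      omega
    rw [coeff_sum_X_pow_of_fintype, if_pos (by rwa [Finsupp.degree_apply] at hdeg),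
      Finsupp.multinomial_eq_of_support_subset (subset_univ _)]
    have hfac : ∀ i, (c i)! = (c i - e i)! * (c i).descFactorial (e i) := fun i =>
      (Nat.factorial_mul_descFactorial (hec i)).symm
    have hspec := Nat.multinomial_spec univ (c - e)
    rw [← Finsupp.degree_eq_sum, hdeg] at hspec
    simp only [Finsupp.tsub_apply] at hspec
    simp only [hfac, cast_mul, prod_mul_distrib, ← hspec]
    push_cast
    ring
  · obtain ⟨i, hi⟩ : ∃ i, c i < e i := by
      simpa [Finsupp.le_def] using hec
    rw [mul_zero, prod_eq_zero (mem_univ i) (by simp [Nat.descFactorial_eq_zero_iff_lt.mpr hi]),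
      mul_zero]

end CommSemiring

section CommRing

variable [CommRing R]

theorem det_vandermonde_X_eq_sum_monomial (k : ℕ) :
    (vandermonde (X : Fin k → MvPolynomial (Fin k) R)).det
      = ∑ π : Equiv.Perm (Fin k), Equiv.Perm.sign π •
          monomial (Finsupp.equivFunOnFinite.symm fun i => (π i : ℕ)) 1 := by
  rw [← det_transpose, det_apply]
  refine sum_congr rfl fun π _ => ?_
  rw [monomial_eq, C_1, one_mul, Finsupp.prod_fintype _ _ fun _ => pow_zero _]
  rfl

theorem isHomogeneous_det_vandermonde_X (k : ℕ) :
    (vandermonde (X : Fin k → MvPolynomial (Fin k) R)).det.IsHomogeneous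
      (∑ i : Fin k, (i : ℕ)) := by
  rw [← det_transpose, det_apply]
  refine IsHomogeneous.sum _ _ _ fun π _ => ?_
  have hπ : (∏ i, (vandermonde (X : Fin k → MvPolynomial (Fin k) R))ᵀ (π i) i).IsHomogeneous
      (∑ i : Fin k, (i : ℕ)) := by
    rw [← Equiv.sum_comp π fun i => (i : ℕ)]
    exact IsHomogeneous.prod _ _ _ fun i _ => isHomogeneous_X_pow i _
  rw [Units.smul_def, ← mem_homogeneousSubmodule]
  exact zsmul_mem ((mem_homogeneousSubmodule _ _).mpr hπ) _

theorem prod_factorial_mul_coeff_sum_X_pow_mul_det_vandermonde [IsDomain R] {k m : ℕ}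
    (c : Fin k →₀ ℕ) (hc : c.degree = m + ∑ i : Fin k, (i : ℕ)) :
    (∏ i, ((c i)! : R)) *
        coeff c ((∑ i, X i : MvPolynomial (Fin k) R) ^ m * (vandermonde X).det)
      = m ! * (vandermonde fun i => (c i : R)).det := by
  rw [det_vandermonde_X_eq_sum_monomial, mul_sum, coeff_sum, mul_sum,
    ← det_descFactorial_eq_det_vandermonde, ← det_transpose, det_apply, mul_sum]
  refine sum_congr rfl fun π _ => ?_
  have hπ : (Finsupp.equivFunOnFinite.symm fun i => (π i : ℕ) : Fin k →₀ ℕ).degree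
      = ∑ i : Fin k, (i : ℕ) := by
    rw [Finsupp.degree_eq_sum]
    exact Equiv.sum_comp π fun i => (i : ℕ)
  rw [mul_smul_comm, coeff_smul, mul_smul_comm, mul_smul_comm,
    prod_factorial_mul_coeff_sum_X_pow_mul_monomial c _ (hπ ▸ hc)]
  rfl

end CommRing

end MvPolynomial

theorem lt_card_image_sum_powersetCard {K : Type*} [Field K] [DecidableEq K]
    (A : Finset K) {k m : ℕ} (c : Fin k →₀ ℕ) (hcA : ∀ i, c i < #A)
    (hc : c.degree = m + ∑ i : Fin k, (i : ℕ))
    (hne : (m ! : K) * (vandermonde fun i => (c i : K)).det ≠ 0) :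
    m < #((A.powersetCard k).image fun S => ∑ x ∈ S, x) := by
  set sums := (A.powersetCard k).image fun S => ∑ x ∈ S, x
  by_contra! hle
  set h : Polynomial K := Polynomial.X ^ (m - #sums) * Lagrange.nodal sums id
  have hmonic : h.Monic := (Polynomial.monic_X_pow _).mul Lagrange.nodal_monic
  have hdeg : h.natDegree = m := by
    rw [Polynomial.natDegree_mul (by simp) Lagrange.nodal_monic.ne_zero,
      Polynomial.natDegree_X_pow, Lagrange.natDegree_nodal]
    omega
  have hvanish : ∀ e ∈ sums, h.eval e = 0 := fun e he =>
    (Polynomial.eval_mul ..).trans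
      (mul_eq_zero_of_right _ (Lagrange.eval_nodal_at_node (v := id) he))
  have hS : (∑ i, X i : MvPolynomial (Fin k) K).IsHomogeneous 1 :=
    IsHomogeneous.sum _ _ _ fun i _ => isHomogeneous_X K i
  have hV := isHomogeneous_det_vandermonde_X (R := K) k
  set F := Polynomial.aeval (∑ i, X i : MvPolynomial (Fin k) K) h * (vandermonde X).det
  have hcoeff : coeff c F ≠ 0 := by
    rw [hS.coeff_aeval_mul one_ne_zero hV h (by rw [hdeg, one_mul, hc]), hmonic.leadingCoeff,
      one_mul, hdeg]
    intro h0
    apply hne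
    rw [← prod_factorial_mul_coeff_sum_X_pow_mul_det_vandermonde c hc, h0, mul_zero]
  have htot : F.totalDegree = c.degree := by
    refine le_antisymm ?_ ?_
    · simpa [hdeg, hc] using hS.totalDegree_aeval_mul_le hV h
    · simpa [Finsupp.degree_apply, Finsupp.sum] using le_totalDegree (mem_support_iff.mpr hcoeff)
  choose B hBA hBcard using fun i => exists_subset_card_eq (hcA i)
  obtain ⟨s, hsB, hs⟩ := combinatorial_nullstellensatz_exists_eval_nonzero F c hcoeff htot B
    (by simp [hBcard])
  have heval : eval s F = h.eval (∑ i, s i) * (vandermonde s).det := by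
    simp [F, Polynomial.aeval_eq_sum_range, Polynomial.eval_eq_sum_range, det_vandermonde]
  rw [heval] at hs
  have hinj : Function.Injective s := det_vandermonde_ne_zero_iff.mp (right_ne_zero_of_mul hs)
  have hmem : ∑ i, s i ∈ sums := by
    refine mem_image.mpr ⟨univ.image s, mem_powersetCard.mpr ⟨?_, ?_⟩, sum_image ?_⟩
    · exact image_subset_iff.mpr fun i _ => hBA i (hsB i)
    · rw [card_image_of_injective _ hinj, Finset.card_univ, Fintype.card_fin]
    · exact fun i _ j _ hij => hinj hij
  exact left_ne_zero_of_mul hs (hvanish _ hmem)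

theorem ZMod.lt_card_image_sum_powersetCard {p : ℕ} (hp : p.Prime) (A : Finset (ZMod p))
    {k m : ℕ} (hk : 0 < k) (hkA : k ≤ #A) (hmp : m < p) (hmA : m ≤ k * (#A - k)) :
    m < #((A.powersetCard k).image fun S => ∑ x ∈ S, x) := by
  have : Fact p.Prime := ⟨hp⟩
  have hAp : #A ≤ p := (card_le_univ A).trans (ZMod.card p).le
  obtain ⟨c, hc_mono, hcA, hc⟩ := exists_strictMono_degree_eq hk hkA hmA
  refine _root_.lt_card_image_sum_powersetCard A c hcA hc (mul_ne_zero ?_ ?_)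
  · rw [Ne, ZMod.natCast_eq_zero_iff, hp.dvd_factorial]
    omega
  · refine det_vandermonde_ne_zero_iff.mpr fun i j hij => hc_mono.injective ?_
    rw [ZMod.natCast_eq_natCast_iff', Nat.mod_eq_of_lt ((hcA i).trans_le hAp),
      Nat.mod_eq_of_lt ((hcA j).trans_le hAp)] at hij
    exact hij

theorem dias_da_silva_hamidoune (p : ℕ) (hp : p.Prime)
    (A : Finset (ZMod p)) (k : ℕ) (hk : 0 < k) :
    min (p : ℤ) (k * ((A.card : ℤ) - k) + 1) ≤
      (((A.powersetCard k).image fun S => ∑ x ∈ S, x).card : ℤ) := by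
  rcases le_or_gt k #A with hkA | hAk
  · have hlt := ZMod.lt_card_image_sum_powersetCard hp A hk hkA
      (m := min (p - 1) (k * (#A - k))) (by have := hp.pos; omega) (min_le_right _ _)
    have hcast : ((k * (#A - k) : ℕ) : ℤ) = k * ((#A : ℤ) - k) := by push_cast [hkA]; ring
    omega
  · rw [powersetCard_eq_empty.mpr hAk, image_empty, card_empty, Nat.cast_zero]
    refine (min_le_right _ _).trans ?_
    have : (#A : ℤ) + 1 ≤ k := by exact_mod_cast hAk
    nlinarith
end

section
/- Let n ≥ 6 be an integer and k an integer with (n+1)/2 ≤ k ≤ n−3 such that n is coprime to both k and k+1. Then BO(k, Z/nZ) = k + 1. -/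
lemma sum_Icc_neg_self (t : ℤ) : ∑ x ∈ Finset.Icc (-t) t, x = 0 := by
  refine Finset.sum_involution (fun a _ => -a) (fun a _ => by ring) ?_
    (fun a ha => by simp only [Finset.mem_Icc] at ha ⊢; omega)
    (fun a _ => neg_neg a)
  intro a ha hne h
  exact hne (by omega)

lemma exists_T (n m : ℕ) (hm : 3 ≤ m) (hmn : 2 * m + 1 ≤ n) :
    ∃ T : Finset ℤ, T.card = m ∧ (0 : ℤ) ∈ T ∧ ∑ x ∈ T, x = 0 ∧
      ∀ x ∈ T, 2 * x.natAbs < n := by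
  rcases Nat.even_or_odd m with ⟨t, ht⟩ | ⟨t, ht⟩
  · -- m = 2t with t ≥ 2
    have ht2 : 2 ≤ t := by omega
    have htriple : ({1, 2, -3} : Finset ℤ) ⊆ Finset.Icc (-(t : ℤ) - 1) (t + 1) := by
      intro x hx
      fin_cases hx <;> simp only [Finset.mem_Icc] <;> omega
    refine ⟨Finset.Icc (-(t : ℤ) - 1) (t + 1) \ {1, 2, -3}, ?_, ?_, ?_, ?_⟩
    · rw [Finset.card_sdiff_of_subset htriple, Int.card_Icc]
      have h3 : ({1, 2, -3} : Finset ℤ).card = 3 := by decide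
      rw [h3]; omega
    · simp only [Finset.mem_sdiff, Finset.mem_Icc, Finset.mem_insert,
        Finset.mem_singleton]
      omega
    · rw [Finset.sum_sdiff_eq_sub htriple]
      have h1 : ∑ x ∈ ({1, 2, -3} : Finset ℤ), x = 0 := by decide
      have h2 : ∑ x ∈ Finset.Icc (-(t : ℤ) - 1) (t + 1), x = 0 := by
        have := sum_Icc_neg_self (t + 1)
        rwa [show -((t : ℤ) + 1) = -(t : ℤ) - 1 by ring] at this
      rw [h1, h2, sub_zero]
    · intro x hx
      simp only [Finset.mem_sdiff, Finset.mem_Icc] at hx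
      omega
  · -- m = 2t+1 with t ≥ 1
    refine ⟨Finset.Icc (-(t : ℤ)) t, ?_, ?_, sum_Icc_neg_self t, ?_⟩
    · rw [Int.card_Icc]; omega
    · simp only [Finset.mem_Icc]; omega
    · intro x hx
      simp only [Finset.mem_Icc] at hx
      omega

theorem BO_eq_succ_of_coprime (n k : ℕ) [NeZero n] (hn : 6 ≤ n)
    (hk1 : n + 1 ≤ 2 * k) (hk2 : k ≤ n - 3)
    (h1 : Nat.Coprime n k) (h2 : Nat.Coprime n (k + 1)) :
    BO k (ZMod n) = k + 1 := by
  classical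
  -- n is odd
  have hnodd : ¬ (2 ∣ n) := by
    intro ⟨a, ha⟩
    rcases Nat.even_or_odd k with ⟨b, hb⟩ | ⟨b, hb⟩
    · have : 2 ∣ Nat.gcd n k := Nat.dvd_gcd ⟨a, ha⟩ ⟨b, by omega⟩
      rw [h1] at this; omega
    · have : 2 ∣ Nat.gcd n (k + 1) := Nat.dvd_gcd ⟨a, ha⟩ ⟨b + 1, by omega⟩
      rw [h2] at this; omega
  have hkunit : IsUnit ((k : ℕ) : ZMod n) :=
    (ZMod.isUnit_iff_coprime k n).2 (Nat.coprime_comm.1 h1)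
  have hk1unit : IsUnit (((k + 1 : ℕ)) : ZMod n) :=
    (ZMod.isUnit_iff_coprime (k + 1) n).2 (Nat.coprime_comm.1 h2)
  have h2unit : IsUnit ((2 : ℕ) : ZMod n) := by
    refine (ZMod.isUnit_iff_coprime 2 n).2 ?_
    rcases Nat.coprime_or_dvd_of_prime Nat.prime_two n with h | h
    · exact h
    · exact absurd h hnodd
  -- the sum of all elements of `ZMod n` is zero
  have hsumuniv : ∑ x : ZMod n, x = 0 := by
    have hneg : ∑ x : ZMod n, x = ∑ x : ZMod n, -x :=
      Fintype.sum_equiv (Equiv.neg (ZMod n)) _ _ (fun x => by simp)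
    have h2s : ∑ x : ZMod n, x + ∑ x : ZMod n, x = 0 := by
      nth_rewrite 2 [hneg]
      rw [← Finset.sum_add_distrib]
      simp
    have hmul : ((2 : ℕ) : ZMod n) * (∑ x : ZMod n, x) = ((2 : ℕ) : ZMod n) * 0 := by
      push_cast
      rw [two_mul, h2s, mul_zero]
    exact h2unit.mul_left_cancel hmul
  -- Upper bound: `k+1` is in the defining set
  have hmem : ∀ A : Finset (ZMod n), k + 1 ≤ A.card → ∃ B ⊆ A, IsBarycentric k B := by
    intro A hA
    obtain ⟨A', hA'sub, hA'card⟩ := Finset.exists_subset_card_eq hA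
    set S := ∑ x ∈ A', x with hS
    set f : ZMod n → ZMod n := fun g => S - (k : ZMod n) * g with hf
    have hfinj : Function.Injective f := by
      intro a b hab
      simp only [hf, sub_right_inj] at hab
      exact hkunit.mul_left_cancel hab
    set P := A'.filter (fun g => f g ∈ A') with hP
    have hPimage : P.image f = (A'.image f) ∩ A' := by
      ext x
      simp only [Finset.mem_image, Finset.mem_inter, hP, Finset.mem_filter]
      constructor
      · rintro ⟨g, ⟨hg, hgf⟩, rfl⟩
        exact ⟨⟨g, hg, rfl⟩, hgf⟩
      · rintro ⟨⟨g, hg, rfl⟩, hx⟩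
        exact ⟨g, ⟨hg, hx⟩, rfl⟩
    have hcardP : 2 ≤ P.card := by
      have h1' : P.card = ((A'.image f) ∩ A').card := by
        rw [← hPimage, Finset.card_image_of_injective _ hfinj]
      have h2' : ((A'.image f) ∩ A').card + ((A'.image f) ∪ A').card
          = (A'.image f).card + A'.card := Finset.card_inter_add_card_union _ _
      have h3' : ((A'.image f) ∪ A').card ≤ n := by
        have := Finset.card_le_univ ((A'.image f) ∪ A')
        rwa [ZMod.card] at this
      have h4' : (A'.image f).card = k + 1 := by
        rw [Finset.card_image_of_injective _ hfinj, hA'card]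
      omega
    have hgex : ∃ g ∈ P, f g ≠ g := by
      by_contra hcon
      push_neg at hcon
      obtain ⟨a, ha, b, hb, hab⟩ := Finset.one_lt_card.1 (by omega : 1 < P.card)
      have hfa := hcon a ha
      have hfb := hcon b hb
      simp only [hf] at hfa hfb
      have hkey : ((k + 1 : ℕ) : ZMod n) * a = ((k + 1 : ℕ) : ZMod n) * b := by
        push_cast
        linear_combination hfb - hfa
      exact hab (hk1unit.mul_left_cancel hkey)
    obtain ⟨g, hgP, hgne⟩ := hgex
    simp only [hP, Finset.mem_filter] at hgP
    obtain ⟨hgA', hfgA'⟩ := hgP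
    refine ⟨A'.erase (f g), (Finset.erase_subset _ _).trans hA'sub, ?_, g, ?_, ?_⟩
    · rw [Finset.card_erase_of_mem hfgA', hA'card]; omega
    · exact Finset.mem_erase.2 ⟨fun h => hgne h.symm, hgA'⟩
    · have hsum := Finset.add_sum_erase A' (fun x : ZMod n => x) hfgA'
      rw [← hS] at hsum
      have hkg : (k • g : ZMod n) = (k : ZMod n) * g := nsmul_eq_mul k g
      rw [hkg]
      have hfg : f g = S - (k : ZMod n) * g := by simp [hf]
      linear_combination hsum - hfg
  -- Lower bound: a set of size `k` with no barycentric subset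
  have hm3 : 3 ≤ n - k := by omega
  have hmn : 2 * (n - k) + 1 ≤ n := by omega
  obtain ⟨T, hTcard, hT0, hTsum, hTbd⟩ := exists_T n (n - k) hm3 hmn
  have hinj : ∀ x ∈ T, ∀ y ∈ T, ((x : ZMod n) = (y : ZMod n)) → x = y := by
    intro x hx y hy hxy
    have hz : ((x - y : ℤ) : ZMod n) = 0 := by push_cast; rw [hxy]; ring
    have hdvd : (n : ℤ) ∣ (x - y) := (ZMod.intCast_zmod_eq_zero_iff_dvd _ _).1 hz
    have hx' := hTbd x hx
    have hy' := hTbd y hy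
    have habs : (x - y).natAbs < n := by omega
    have hxy0 : x - y = 0 := Int.eq_zero_of_abs_lt_dvd hdvd (by
      rw [Int.abs_eq_natAbs]; exact_mod_cast habs)
    omega
  set B₀ := T.image (fun x : ℤ => (x : ZMod n)) with hB₀
  have hB₀card : B₀.card = n - k := by
    rw [hB₀, Finset.card_image_of_injOn (fun x hx y hy h => hinj x hx y hy h), hTcard]
  have hB₀sum : ∑ x ∈ B₀, x = 0 := by
    rw [hB₀, Finset.sum_image hinj]
    have hcast : ∑ x ∈ T, ((x : ℤ) : ZMod n) = ((∑ x ∈ T, x : ℤ) : ZMod n) := by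
      push_cast; ring
    rw [hcast, hTsum]; simp
  have h0B₀ : (0 : ZMod n) ∈ B₀ := hB₀ ▸ Finset.mem_image.2 ⟨0, hT0, by simp⟩
  set A₀ := B₀ᶜ with hA₀
  have hA₀card : A₀.card = k := by
    rw [hA₀, Finset.card_compl, ZMod.card, hB₀card]; omega
  have hA₀sum : ∑ x ∈ A₀, x = 0 := by
    have hsc := Finset.sum_add_sum_compl B₀ (fun x : ZMod n => x)
    rw [hB₀sum, hsumuniv] at hsc
    simpa [hA₀] using hsc
  have h0A₀ : (0 : ZMod n) ∉ A₀ := by simp [hA₀, h0B₀]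
  -- conclude
  have hBOeq : BO k (ZMod n)
      = sInf {ℓ : ℕ | ∀ A : Finset (ZMod n), ℓ ≤ A.card → ∃ B ⊆ A, IsBarycentric k B} :=
    rfl
  rw [hBOeq]
  apply le_antisymm
  · exact Nat.sInf_le hmem
  · refine le_csInf ⟨k + 1, hmem⟩ ?_
    intro ℓ hℓ
    by_contra hlt
    push_neg at hlt
    obtain ⟨B, hBA₀, hB⟩ := hℓ A₀ (by omega)
    obtain ⟨hBcard, g, hgB, hgsum⟩ := hB
    have hBeq : B = A₀ :=
      Finset.eq_of_subset_of_card_le hBA₀ (by rw [hBcard, hA₀card])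
    rw [hBeq] at hgB hgsum
    rw [hA₀sum] at hgsum
    have hkg : ((k : ℕ) : ZMod n) * g = ((k : ℕ) : ZMod n) * 0 := by
      rw [← nsmul_eq_mul, ← hgsum, mul_zero]
    have hg0 : g = 0 := hkunit.mul_left_cancel hkg
    rw [hg0] at hgB
    exact h0A₀ hgB
end

section
/- Let p ≥ 7 be a prime and k an integer with (p+1)/2 ≤ k ≤ p−3. Then BO(k, Z/pZ) = k + 1. -/
open Finset

/-- A symmetric punctured interval in ℤ sums to zero. -/
lemma aux_sum_sym (s : Finset ℤ) (hs : ∀ x ∈ s, -x ∈ s) (h0 : (0:ℤ) ∉ s) :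
    ∑ x ∈ s, x = 0 := by
  refine Finset.sum_involution (fun a _ => -a) (fun a _ => by ring) ?_ (fun a ha => hs a ha)
    (fun a _ => by ring)
  intro a ha hne h
  have : a = 0 := by omega
  exact h0 (this ▸ ha)

/-- Construction of an integer set of size k, sum 0, all elements nonzero and small. -/
lemma aux_int_set (p k : ℕ) (hp : 7 ≤ p) (hodd : p % 2 = 1)
    (hk1 : p + 1 ≤ 2 * k) (hk2 : k ≤ p - 3) :
    ∃ S : Finset ℤ, S.card = k ∧ (∑ x ∈ S, x) = 0 ∧
      ∀ x ∈ S, x ≠ 0 ∧ 2 * |x| < (p : ℤ) := by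
  have hk4 : 4 ≤ k := by omega
  rcases Nat.even_or_odd k with ⟨j, hj⟩ | ⟨j, hj⟩
  · -- k = 2j : take {±1, ..., ±j}
    refine ⟨(Finset.Icc (-(j:ℤ)) j).erase 0, ?_, ?_, ?_⟩
    · rw [Finset.card_erase_of_mem (by simp [Finset.mem_Icc]), Int.card_Icc]
      omega
    · refine aux_sum_sym _ ?_ (by simp)
      intro x hx
      simp only [Finset.mem_erase, Finset.mem_Icc] at hx ⊢
      omega
    · intro x hx
      simp only [Finset.mem_erase, Finset.mem_Icc] at hx
      constructor
      · exact hx.1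
      · have : |x| ≤ (j:ℤ) := abs_le.mpr hx.2
        omega
  · -- k = 2j+1 : take {±1, ..., ±(j+2)} minus {-1, -2, 3}
    have hj2 : 2 ≤ j := by omega
    have hkp : k + 4 ≤ p := by omega
    set J : ℤ := (j : ℤ) + 2 with hJ
    have hT : ({-1, -2, 3} : Finset ℤ) ⊆ (Finset.Icc (-J) J).erase 0 := by
      intro x hx
      simp only [Finset.mem_insert, Finset.mem_singleton] at hx
      simp only [Finset.mem_erase, Finset.mem_Icc]
      rcases hx with h | h | h <;> subst h <;> constructor <;> omega
    refine ⟨((Finset.Icc (-J) J).erase 0) \ {-1, -2, 3}, ?_, ?_, ?_⟩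
    · rw [Finset.card_sdiff_of_subset hT,
        Finset.card_erase_of_mem (by rw [Finset.mem_Icc]; omega), Int.card_Icc]
      simp only [hJ]
      have : ({-1, -2, 3} : Finset ℤ).card = 3 := by decide
      rw [this]
      omega
    · rw [Finset.sum_sdiff_eq_sub hT]
      have h1 : ∑ x ∈ ({-1, -2, 3} : Finset ℤ), x = 0 := by decide
      have h2 : ∑ x ∈ (Finset.Icc (-J) J).erase 0, x = 0 := by
        refine aux_sum_sym _ ?_ (by simp)
        intro x hx
        simp only [Finset.mem_erase, Finset.mem_Icc] at hx ⊢
        omega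
      rw [h1, h2]; ring
    · intro x hx
      simp only [Finset.mem_sdiff, Finset.mem_erase, Finset.mem_Icc] at hx
      constructor
      · exact hx.1.1
      · have : |x| ≤ J := abs_le.mpr hx.1.2
        omega

/-- Counterexample set in ZMod p: size k, sum 0, not containing 0. -/
lemma aux_zmod_set (p k : ℕ) [Fact p.Prime] (hp : 7 ≤ p)
    (hk1 : p + 1 ≤ 2 * k) (hk2 : k ≤ p - 3) :
    ∃ A : Finset (ZMod p), A.card = k ∧ (∑ x ∈ A, x) = 0 ∧ (0 : ZMod p) ∉ A := by
  have hprime := (Fact.out : p.Prime)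
  have hodd : p % 2 = 1 := by
    rcases hprime.eq_two_or_odd with h | h
    · omega
    · exact h
  obtain ⟨S, hcard, hsum, hbound⟩ := aux_int_set p k hp hodd hk1 hk2
  have hinj : Set.InjOn (fun x : ℤ => (x : ZMod p)) S := by
    intro a ha b hb hab
    simp only at hab
    rw [ZMod.intCast_eq_intCast_iff] at hab
    have hd : (p:ℤ) ∣ b - a := hab.dvd
    have h1 := (hbound a ha).2
    have h2 := (hbound b hb).2
    have : b - a = 0 := Int.eq_zero_of_abs_lt_dvd hd (by
      have := abs_sub_abs_le_abs_sub b a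
      have h3 : |b - a| ≤ |b| + |a| := abs_sub b a
      omega)
    omega
  refine ⟨S.image (fun x : ℤ => (x : ZMod p)), ?_, ?_, ?_⟩
  · rw [Finset.card_image_of_injOn hinj, hcard]
  · rw [Finset.sum_image (fun a ha b hb => hinj ha hb)]
    have h2 : ((∑ x ∈ S, x : ℤ) : ZMod p) = 0 := by rw [hsum]; simp
    rwa [Int.cast_sum] at h2
  · intro h
    rw [Finset.mem_image] at h
    obtain ⟨x, hx, hx0⟩ := h
    rw [ZMod.intCast_zmod_eq_zero_iff_dvd] at hx0
    have := Int.eq_zero_of_abs_lt_dvd hx0 (by have := (hbound x hx).2; omega)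
    exact (hbound x hx).1 this

/-- Upper bound: every (k+1)-set contains a k-barycentric subset. -/
lemma aux_upper (p k : ℕ) [Fact p.Prime] (hp : 7 ≤ p)
    (hk1 : p + 1 ≤ 2 * k) (hk2 : k ≤ p - 3)
    (A : Finset (ZMod p)) (hA : A.card = k + 1) :
    ∃ B ⊆ A, IsBarycentric k B := by
  have hprime := (Fact.out : p.Prime)
  have hkp : k < p := by omega
  have hkz : (k : ZMod p) ≠ 0 := by
    rw [Ne, ZMod.natCast_eq_zero_iff]
    intro h
    have := Nat.le_of_dvd (by omega) h
    omega
  have hk1z : ((k : ZMod p) + 1) ≠ 0 := by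
    have : ((k+1 : ℕ) : ZMod p) ≠ 0 := by
      rw [Ne, ZMod.natCast_eq_zero_iff]
      intro h
      have := Nat.le_of_dvd (by omega) h
      omega
    push_cast at this
    exact this
  set s : ZMod p := ∑ x ∈ A, x with hs
  set f : ZMod p → ZMod p := fun a => (s - a) * (k : ZMod p)⁻¹ with hf
  have hfinj : Function.Injective f := by
    intro a b hab
    simp only [hf] at hab
    have := mul_right_cancel₀ (inv_ne_zero hkz) hab
    exact (sub_right_inj.mp this)
  -- main claim: ∃ a ∈ A, f a ∈ A ∧ f a ≠ a
  have hmain : ∃ a ∈ A, f a ∈ A ∧ f a ≠ a := by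
    by_contra hcon
    push_neg at hcon
    classical
    have hsplit := Finset.card_filter_add_card_filter_not
      (s := A) (fun a => f a ∈ A)
    have h1 : (A.filter (fun a => f a ∈ A)).card ≤ 1 := by
      refine Finset.card_le_one.mpr ?_
      intro a ha b hb
      simp only [Finset.mem_filter] at ha hb
      have ha' : f a = a := hcon a ha.1 ha.2
      have hb' : f b = b := hcon b hb.1 hb.2
      simp only [hf] at ha' hb'
      have ha2 : s - a = a * (k : ZMod p) :=
        (mul_inv_eq_iff_eq_mul₀ hkz).mp ha'
      have hb2 : s - b = b * (k : ZMod p) :=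
        (mul_inv_eq_iff_eq_mul₀ hkz).mp hb'
      have ha3 : a * ((k : ZMod p) + 1) = s := by linear_combination -ha2
      have hb3 : b * ((k : ZMod p) + 1) = s := by linear_combination -hb2
      have := ha3.trans hb3.symm
      exact mul_right_cancel₀ hk1z this
    have h2 : (A.filter (fun a => ¬ f a ∈ A)).card ≤ p - (k + 1) := by
      have himg : (A.filter (fun a => ¬ f a ∈ A)).image f ⊆ Aᶜ := by
        intro x hx
        rw [Finset.mem_image] at hx
        obtain ⟨a, ha, rfl⟩ := hx
        simp only [Finset.mem_filter] at ha
        rw [Finset.mem_compl]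
        exact ha.2
      have hcardimg : ((A.filter (fun a => ¬ f a ∈ A)).image f).card
          = (A.filter (fun a => ¬ f a ∈ A)).card :=
        Finset.card_image_of_injective _ hfinj
      have := Finset.card_le_card himg
      rw [hcardimg] at this
      have hc : (Aᶜ : Finset (ZMod p)).card = p - (k+1) := by
        rw [Finset.card_compl, ZMod.card, hA]
      omega
    omega
  obtain ⟨a, ha, hfa, hfane⟩ := hmain
  refine ⟨A.erase a, Finset.erase_subset _ _, ?_, f a, ?_, ?_⟩
  · rw [Finset.card_erase_of_mem ha, hA]
    omega
  · rw [Finset.mem_erase]; exact ⟨hfane, hfa⟩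
  · rw [Finset.sum_erase_eq_sub ha, ← hs]
    rw [nsmul_eq_mul]
    simp only [hf]
    rw [mul_comm, inv_mul_cancel_right₀ hkz]

theorem BO_eq_succ_prime (p : ℕ) [Fact p.Prime] (hp : 7 ≤ p)
    (k : ℕ) (hk1 : p + 1 ≤ 2 * k) (hk2 : k ≤ p - 3) :
    BO k (ZMod p) = k + 1 := by
  have hprime := (Fact.out : p.Prime)
  have hkz : (k : ZMod p) ≠ 0 := by
    rw [Ne, ZMod.natCast_eq_zero_iff]
    intro h
    have := Nat.le_of_dvd (by omega) h
    omega
  have hmem : (k + 1) ∈ {ℓ : ℕ | ∀ A : Finset (ZMod p), ℓ ≤ A.card →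
      ∃ B ⊆ A, IsBarycentric k B} := by
    intro A hA
    obtain ⟨A', hA'sub, hA'card⟩ := Finset.exists_subset_card_eq hA
    obtain ⟨B, hBsub, hB⟩ := aux_upper p k hp hk1 hk2 A' hA'card
    exact ⟨B, hBsub.trans hA'sub, hB⟩
  unfold BO
  apply le_antisymm
  · exact Nat.sInf_le hmem
  · refine le_csInf ⟨k + 1, hmem⟩ ?_
    intro ℓ hℓ
    by_contra hlt
    push_neg at hlt
    obtain ⟨A, hAcard, hAsum, hA0⟩ := aux_zmod_set p k hp hk1 hk2
    obtain ⟨B, hBsub, hBcard, g, hg, hgsum⟩ := hℓ A (by omega)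
    have hBA : B = A := Finset.eq_of_subset_of_card_le hBsub (by omega)
    subst hBA
    rw [hAsum, nsmul_eq_mul] at hgsum
    rcases mul_eq_zero.mp hgsum.symm with h | h
    · exact hkz h
    · exact hA0 (h ▸ hg)
end

section
/- Let n ≥ 6 be an integer coprime to k and k+1, with (n+1)/2 ≤ k ≤ n−3, and let A ⊆ Z/nZ with |A| = k+1. Then A contains a k-barycentric subset. -/
theorem barycentric_subset_card_succ (n k : ℕ) [NeZero n] (hn : 6 ≤ n)
    (hk1 : n + 1 ≤ 2 * k) (hk2 : k ≤ n - 3)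
    (h1 : Nat.Coprime n k) (h2 : Nat.Coprime n (k + 1))
    (A : Finset (ZMod n)) (hA : A.card = k + 1) :
    ∃ B ⊆ A, IsBarycentric k B := by
  set s : ZMod n := ∑ x ∈ A, x with hs
  have hku : IsUnit (k : ZMod n) := (ZMod.isUnit_iff_coprime k n).2 h1.symm
  have hk1u : IsUnit ((k : ZMod n) + 1) := by
    have := (ZMod.isUnit_iff_coprime (k + 1) n).2 h2.symm
    simpa using this
  set f : ZMod n → ZMod n := fun g => s - (k : ZMod n) * g with hf
  have hfinj : Function.Injective f := by
    intro a b hab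
    have h : (k : ZMod n) * a = (k : ZMod n) * b := by linear_combination -hab
    exact hku.mul_left_cancel h
  -- T : elements g of A with f g ∈ A
  set T : Finset (ZMod n) := A.filter (fun g => f g ∈ A) with hT
  have himg : T.image f = (A.image f) ∩ A := by
    ext a
    simp only [Finset.mem_image, Finset.mem_inter, hT, Finset.mem_filter]
    constructor
    · rintro ⟨g, ⟨hg, hfg⟩, rfl⟩
      exact ⟨⟨g, hg, rfl⟩, hfg⟩
    · rintro ⟨⟨g, hg, rfl⟩, ha⟩
      exact ⟨g, ⟨hg, ha⟩, rfl⟩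
  have hcardT : 2 ≤ T.card := by
    have h1' : T.card = ((A.image f) ∩ A).card := by
      rw [← himg, Finset.card_image_of_injective _ hfinj]
    have hcimg : (A.image f).card = k + 1 := by
      rw [Finset.card_image_of_injective _ hfinj, hA]
    have hunion : ((A.image f) ∪ A).card ≤ n := by
      have := Finset.card_le_univ ((A.image f) ∪ A)
      simpa [ZMod.card n] using this
    have := Finset.card_inter_add_card_union (A.image f) A
    omega
  -- fixed points of f in A: at most one
  set F : Finset (ZMod n) := A.filter (fun g => f g = g) with hF
  have hcardF : F.card ≤ 1 := by
    apply Finset.card_le_one.2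
    intro a ha b hb
    simp only [hF, Finset.mem_filter, hf] at ha hb
    have ha' : ((k : ZMod n) + 1) * a = s := by
      linear_combination -ha.2
    have hb' : ((k : ZMod n) + 1) * b = s := by
      linear_combination -hb.2
    exact hk1u.mul_left_cancel (ha'.trans hb'.symm)
  have : ¬ T ⊆ F := by
    intro hsub
    have := Finset.card_le_card hsub
    omega
  obtain ⟨g, hgT, hgF⟩ := Finset.not_subset.1 this
  simp only [hT, Finset.mem_filter] at hgT
  obtain ⟨hgA, hfgA⟩ := hgT
  have hne : f g ≠ g := by
    intro h
    exact hgF (by simp [hF, Finset.mem_filter, hgA, h])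
  refine ⟨A.erase (f g), Finset.erase_subset _ _, ?_, g, ?_, ?_⟩
  · rw [Finset.card_erase_of_mem hfgA, hA]; omega
  · exact Finset.mem_erase.2 ⟨fun h => hne h.symm, hgA⟩
  · rw [Finset.sum_erase_eq_sub hfgA, ← hs, hf, nsmul_eq_mul]
    ring
end

section
/- Let p ≥ 7 be a prime and k = (p−1)/2. Then BO(k, Z/pZ) = k+1 if the multiplicative order of 2 modulo p is odd, and BO(k, Z/pZ) = k+2 if that order is even. -/
/-!
Since `2 * k = -1` in `ZMod p`, a `k`-set `B` is barycentric exactly when `-2 * ∑ B ∈ B`.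
If a `(k + 1)`-set `A` has no barycentric subset, applying this to every `A \ {a}` shows that
`a ↦ 2 * a - 2 * ∑ A` maps `A` into its complement except at its fixed point; counting then
forces the translate `T = A - 2 * ∑ A` to contain `0` and exactly one of `x`, `2 * x` for each
`x ≠ 0`. Following the orbit of `1` under doubling, such a `T` cannot exist when `2` has odd
order. When the order is even, choosing every other element along each coset of `⟨2⟩` produces
one, and it has `k + 1` elements, sum `0` and no barycentric subset. A `(k + 2)`-set without
barycentric subsets becomes, after translation by `2 * ∑ A / 3`, a set of `k + 2` nonzero
elements stable under multiplication by `-2`; the order of `-2` then divides `k + 2` and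
`p - 1 = 2 * k`, hence `4`, which forces `p ∣ 15`. A `k`-set `A` with `-2 * ∑ A ∉ A` is found
by counting.
-/

open Finset

theorem BO_eq_succ_of {k : ℕ} {G : Type*} [AddCommGroup G] [Fintype G] {n : ℕ}
    (hsucc : ∀ A : Finset G, A.card = n + 1 → ∃ B ⊆ A, IsBarycentric k B)
    (hn : ∃ A : Finset G, A.card = n ∧ ∀ B ⊆ A, ¬ IsBarycentric k B) :
    BO k G = n + 1 := by
  obtain ⟨A₀, hA₀, hA₀B⟩ := hn
  have hmem : n + 1 ∈
      {ℓ : ℕ | ∀ A : Finset G, ℓ ≤ A.card → ∃ B ⊆ A, IsBarycentric k B} := by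
    intro A hA
    obtain ⟨A', hA'A, hA'⟩ := exists_subset_card_eq hA
    obtain ⟨B, hBA', hB⟩ := hsucc A' hA'
    exact ⟨B, hBA'.trans hA'A, hB⟩
  refine le_antisymm (Nat.sInf_le hmem) (Nat.succ_le_of_lt (lt_of_not_ge fun hle => ?_))
  obtain ⟨B, hBA, hB⟩ := Nat.sInf_mem ⟨_, hmem⟩ A₀ (hle.trans hA₀.ge)
  exact hA₀B B hBA hB

theorem isBarycentric_iff_neg_two_mul_sum_mem {R : Type*} [CommRing R] {k : ℕ}
    (hk : (2 : R) * k = -1) {B : Finset R} :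
    IsBarycentric k B ↔ B.card = k ∧ -(2 * ∑ x ∈ B, x) ∈ B := by
  refine and_congr_right fun _ => ⟨?_, fun h => ⟨_, h, ?_⟩⟩
  · rintro ⟨g, hg, hsum⟩
    convert hg using 1
    rw [hsum, nsmul_eq_mul]
    linear_combination (-g) * hk
  · rw [nsmul_eq_mul]
    linear_combination (∑ x ∈ B, x) * hk

theorem Subgroup.card_dvd_card_of_mul_mem {G : Type*} [Group G] (H : Subgroup G) {s : Set G}
    (hs : ∀ x ∈ s, ∀ h ∈ H, x * h ∈ s) : Nat.card H ∣ Nat.card s := by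
  have hsat : QuotientGroup.mk ⁻¹' (QuotientGroup.mk '' s : Set (G ⧸ H)) = s := by
    refine Set.Subset.antisymm ?_ (Set.subset_preimage_image _ _)
    rintro y ⟨x, hx, hxy⟩
    simpa using hs x hx _ (QuotientGroup.eq.mp hxy)
  rw [← hsat, QuotientGroup.card_preimage_mk]
  exact dvd_mul_right _ _

theorem orderOf_dvd_card_of_mul_mem {M₀ : Type*} [CommGroupWithZero M₀] [Finite M₀]
    {F : Finset M₀} (hF : 0 ∉ F) {g : M₀} (hg : g ≠ 0) (hgF : ∀ x ∈ F, g * x ∈ F) :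
    orderOf g ∣ F.card := by
  set u := Units.mk0 g hg
  set s : Set M₀ˣ := {x | (x : M₀) ∈ F}
  have hpow : ∀ x ∈ s, ∀ n : ℕ, x * u ^ n ∈ s := by
    intro x hx n
    induction n with
    | zero => simpa using hx
    | succ n ih =>
      rw [pow_succ, ← mul_assoc]
      show ((x * u ^ n * u : M₀ˣ) : M₀) ∈ F
      rw [Units.val_mul, Units.val_mk0, mul_comm]
      exact hgF _ ih
  have hval : Units.val '' s = F := by
    refine Set.Subset.antisymm (Set.image_subset_iff.mpr fun x hx => hx) fun y hy => ?_
    exact ⟨Units.mk0 y (ne_of_mem_of_not_mem hy hF), hy, rfl⟩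
  have hdvd := Subgroup.card_dvd_card_of_mul_mem (Subgroup.zpowers u) (s := s)
    fun x hx h hh => by
      obtain ⟨n, rfl⟩ := mem_powers_iff_mem_zpowers.mpr hh
      exact hpow x hx n
  rwa [Nat.card_zpowers, ← orderOf_units, Units.val_mk0, ← Nat.card_image_of_injective
    Units.val_injective, hval, Nat.card_coe_set_eq, Set.ncard_coe_finset] at hdvd

theorem exists_set_mul_mem_iff_notMem {G : Type*} [Group G] {u : G} (hu : Even (orderOf u)) :
    ∃ s : Set G, ∀ x, x * u ∈ s ↔ x ∉ s := by
  have hrep : ∀ x : G, ∃ n : ℤ,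
      (QuotientGroup.mk x : G ⧸ Subgroup.zpowers u).out * u ^ n = x := by
    intro x
    obtain ⟨⟨h, hh⟩, hout⟩ := QuotientGroup.mk_out_eq_mul (Subgroup.zpowers u) x
    obtain ⟨n, rfl⟩ := Subgroup.mem_zpowers_iff.mp hh
    exact ⟨-n, by rw [hout, mul_assoc, ← zpow_add, add_neg_cancel, zpow_zero, mul_one]⟩
  choose e he using hrep
  -- the parity of the exponent `e x` is well defined because `orderOf u` is even
  refine ⟨{x | Even (e x)}, fun x => ?_⟩
  have hmk : (QuotientGroup.mk (x * u) : G ⧸ Subgroup.zpowers u) = QuotientGroup.mk x :=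
    QuotientGroup.mk_mul_of_mem x (Subgroup.mem_zpowers u)
  have hpow : u ^ e (x * u) = u ^ (e x + 1) := by
    have h := he (x * u)
    rw [hmk] at h
    apply mul_left_cancel (a := (QuotientGroup.mk x : G ⧸ Subgroup.zpowers u).out)
    rw [h, zpow_add_one, ← mul_assoc, he x]
  have hmod : e (x * u) ≡ e x + 1 [ZMOD 2] :=
    (zpow_eq_zpow_iff_modEq.mp hpow).of_dvd (Int.natCast_dvd_natCast.mpr (even_iff_two_dvd.mp hu))
  simp only [Set.mem_ofPred_eq, Int.even_iff]
  rw [Int.ModEq] at hmod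
  omega

def AlternatesUnderDoubling {R : Type*} [Semiring R] (T : Finset R) : Prop :=
  0 ∈ T ∧ ∀ x ≠ 0, 2 * x ∈ T ↔ x ∉ T

theorem AlternatesUnderDoubling.even_orderOf_two {R : Type*} [Ring R] [Nontrivial R]
    {T : Finset R} (hT : AlternatesUnderDoubling T) : Even (orderOf (2 : R)) := by
  by_contra hodd
  have h2 : IsUnit (2 : R) :=
    (orderOf_pos_iff.mp (Nat.pos_of_ne_zero fun h => hodd (by simp [h]))).isUnit
  have hiter : ∀ n : ℕ, (2 : R) ^ n ∈ T ↔ (1 ∈ T ↔ Even n) := by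
    intro n
    induction n with
    | zero => simp
    | succ n ih =>
      rw [pow_succ', hT.2 _ (h2.pow n).ne_zero, ih, Nat.even_add_one]
      tauto
  have := hiter (orderOf (2 : R))
  rw [pow_orderOf_eq_one] at this
  tauto

section FiniteField

variable {K : Type*} [Field K] [Fintype K] {k : ℕ}

theorem two_mul_eq_neg_one_of_card (hk : 2 * k + 1 = Fintype.card K) : (2 : K) * k = -1 := by
  have h := FiniteField.cast_card_eq_zero K
  rw [← hk] at h
  push_cast at h
  linear_combination h

theorem two_ne_zero_of_card (hk : 2 * k + 1 = Fintype.card K) : (2 : K) ≠ 0 :=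
  left_ne_zero_of_mul (two_mul_eq_neg_one_of_card hk ▸ neg_ne_zero.mpr one_ne_zero)

theorem exists_card_eq_forall_not_isBarycentric (hk : 2 * k + 1 = Fintype.card K)
    (h3 : (3 : K) ≠ 0) : ∃ A : Finset K, A.card = k ∧ ∀ B ⊆ A, ¬ IsBarycentric k B := by
  classical
  have h2 := two_ne_zero_of_card hk
  have hk0 : 0 < k := by have := Fintype.one_lt_card (α := K); omega
  obtain ⟨b, -, hb⟩ :=
    exists_subset_card_eq (s := (univ : Finset K)) (n := k - 1) (by simp; omega)
  set σ := ∑ x ∈ b, x with hσ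
  -- `c` is admissible unless `c ∈ b`, `-2 (c + σ) ∈ b`, or `c = -2 (c + σ)`
  set bad := b ∪ b.image (fun y => -(y / 2) - σ) ∪ {-(2 * σ) / 3}
  have hbad : bad.card < (univ : Finset K).card := by
    calc bad.card ≤ b.card + b.card + 1 := by
          grw [card_union_le, card_union_le, card_image_le, card_singleton]
      _ < (univ : Finset K).card := by rw [card_univ, ← hk, hb]; omega
  obtain ⟨c, -, hc⟩ := exists_mem_notMem_of_card_lt_card hbad
  simp only [bad, mem_union, mem_image, mem_singleton, not_or, not_exists, not_and] at hc
  obtain ⟨⟨hcb, hcimg⟩, hcfix⟩ := hc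
  have hcard : (insert c b).card = k := by rw [card_insert_of_notMem hcb, hb]; omega
  refine ⟨insert c b, hcard, fun B hB hbary => ?_⟩
  obtain rfl : B = insert c b := eq_of_subset_of_card_le hB (by rw [hcard, hbary.1])
  rw [isBarycentric_iff_neg_two_mul_sum_mem (two_mul_eq_neg_one_of_card hk), sum_insert hcb,
    ← hσ] at hbary
  rcases mem_insert.mp hbary.2 with hfix | hmem
  · exact hcfix (by field_simp; linear_combination -hfix)
  · exact hcimg _ hmem
      (by rw [neg_div, neg_neg, mul_div_cancel_left₀ _ h2, add_sub_cancel_right])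

theorem alternatesUnderDoubling_iff_image_two_mul_eq_compl [DecidableEq K]
    (h2 : (2 : K) ≠ 0) {T : Finset K} (h0 : 0 ∈ T) :
    AlternatesUnderDoubling T ↔ (T.erase 0).image (2 * ·) = Tᶜ := by
  refine ⟨fun hT => ?_, fun himg =>
    ⟨h0, fun x hx => ⟨fun h2x hxT => ?_, fun hxT => ?_⟩⟩⟩
  · ext y
    simp only [mem_image, mem_erase, mem_compl]
    constructor
    · rintro ⟨x, ⟨hx0, hxT⟩, rfl⟩ h2x
      exact (hT.2 x hx0).mp h2x hxT
    · intro hy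
      have hy2 : y / 2 ≠ 0 := div_ne_zero (ne_of_mem_of_not_mem h0 hy).symm h2
      refine ⟨y / 2, ⟨hy2, ?_⟩, mul_div_cancel₀ y h2⟩
      by_contra h
      exact hy (by simpa [mul_div_cancel₀ y h2] using (hT.2 (y / 2) hy2).mpr h)
  · exact mem_compl.mp (himg ▸ mem_image_of_mem _ (mem_erase.mpr ⟨hx, hxT⟩)) h2x
  · by_contra h2x
    obtain ⟨t, ht, htx⟩ := mem_image.mp (himg ▸ mem_compl.mpr h2x : 2 * x ∈ _)
    exact hxT (mul_left_cancel₀ h2 htx ▸ (mem_erase.mp ht).2)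

theorem AlternatesUnderDoubling.card_eq (hk : 2 * k + 1 = Fintype.card K) {T : Finset K}
    (hT : AlternatesUnderDoubling T) : T.card = k + 1 := by
  classical
  have h2 := two_ne_zero_of_card hk
  have h := congrArg card ((alternatesUnderDoubling_iff_image_two_mul_eq_compl h2 hT.1).mp hT)
  rw [card_image_of_injective _ (mul_right_injective₀ h2), card_erase_of_mem hT.1, card_compl,
    ← hk] at h
  have := card_pos.mpr ⟨0, hT.1⟩
  have := card_le_univ T
  omega

theorem AlternatesUnderDoubling.sum_eq_zero (hk : 2 * k + 1 = Fintype.card K) (h3 : (3 : K) ≠ 0)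
    {T : Finset K} (hT : AlternatesUnderDoubling T) : ∑ x ∈ T, x = 0 := by
  classical
  have h2 := two_ne_zero_of_card hk
  have h4 : (4 : K) ≠ 0 := by simpa [show (4 : K) = 2 * 2 by norm_num] using mul_ne_zero h2 h2
  have hfour : ∀ x ∈ T, 4 * x ∈ T := by
    intro x hx
    rcases eq_or_ne x 0 with rfl | hx0
    · simpa using hT.1
    · have h2x : 2 * x ∉ T := fun h => (hT.2 x hx0).mp h hx
      have := (hT.2 (2 * x) (mul_ne_zero h2 hx0)).mpr h2x
      rwa [← mul_assoc, show (2 : K) * 2 = 4 by norm_num] at this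
  have himg : T.image (4 * ·) = T := eq_of_subset_of_card_le (image_subset_iff.mpr hfour)
    (card_image_of_injective _ (mul_right_injective₀ h4)).ge
  have hsum : 4 * ∑ x ∈ T, x = ∑ x ∈ T, x := by
    conv_rhs => rw [← himg]
    rw [sum_image fun x _ y _ h => mul_left_cancel₀ h4 h, mul_sum]
  exact (mul_eq_zero.mp (by linear_combination hsum : (3 : K) * _ = 0)).resolve_left h3

theorem AlternatesUnderDoubling.not_isBarycentric (hk : 2 * k + 1 = Fintype.card K)
    (h3 : (3 : K) ≠ 0) {T : Finset K} (hT : AlternatesUnderDoubling T) :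
    ∀ B ⊆ T, ¬ IsBarycentric k B := by
  classical
  intro B hBT hB
  rw [isBarycentric_iff_neg_two_mul_sum_mem (two_mul_eq_neg_one_of_card hk)] at hB
  obtain ⟨hBcard, hmem⟩ := hB
  obtain ⟨a, haT, haB⟩ := exists_of_ssubset (ssubset_of_subset_of_ne hBT fun h => by
    have := hT.card_eq hk
    rw [← h] at this
    omega)
  obtain rfl : B = T.erase a := eq_of_subset_of_card_le
    (fun x hx => mem_erase.mpr ⟨ne_of_mem_of_not_mem hx haB, hBT hx⟩)
    (by rw [card_erase_of_mem haT, hT.card_eq hk, hBcard]; rfl)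
  rw [sum_erase_eq_sub haT, hT.sum_eq_zero hk h3, zero_sub, mul_neg, neg_neg, mem_erase] at hmem
  obtain ⟨hne, h2a⟩ := hmem
  rcases eq_or_ne a 0 with rfl | ha0
  · exact hne (mul_zero 2)
  · exact (hT.2 a ha0).mp h2a haT

theorem exists_alternatesUnderDoubling (h2 : (2 : K) ≠ 0) (heven : Even (orderOf (2 : K))) :
    ∃ T : Finset K, AlternatesUnderDoubling T := by
  classical
  obtain ⟨s, hs⟩ := exists_set_mul_mem_iff_notMem (u := Units.mk0 (2 : K) h2)
    (by rwa [← orderOf_units, Units.val_mk0])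
  refine ⟨univ.filter fun x => ∀ hx : x ≠ 0, Units.mk0 x hx ∈ s, by simp, fun x hx => ?_⟩
  have : Units.mk0 (2 * x) (mul_ne_zero h2 hx) = Units.mk0 x hx * Units.mk0 2 h2 :=
    Units.ext (mul_comm _ _)
  simp [hx, h2, this, hs]

theorem eq_two_mul_sum_of_two_mul_sub_mem (hk : 2 * k + 1 = Fintype.card K) {A : Finset K}
    (hA : A.card = k + 1) (hno : ∀ B ⊆ A, ¬ IsBarycentric k B) {a : K} (ha : a ∈ A)
    (h : 2 * a - 2 * ∑ x ∈ A, x ∈ A) : a = 2 * ∑ x ∈ A, x := by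
  classical
  by_contra hne
  apply hno (A.erase a) (erase_subset a A)
  rw [isBarycentric_iff_neg_two_mul_sum_mem (two_mul_eq_neg_one_of_card hk),
    card_erase_of_mem ha, hA, sum_erase_eq_sub ha]
  refine ⟨rfl, mem_erase.mpr ⟨fun h' => hne (by linear_combination h'), ?_⟩⟩
  convert h using 1
  ring

theorem alternatesUnderDoubling_of_card (hk : 2 * k + 1 = Fintype.card K) {T : Finset K}
    (hT : T.card = k + 1) (hdouble : ∀ t ∈ T, 2 * t ∈ T → t = 0) :
    AlternatesUnderDoubling T := by
  classical
  have h2 := two_ne_zero_of_card hk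
  have hinj : Function.Injective (2 * · : K → K) := mul_right_injective₀ h2
  have hsub : ∀ T' ⊆ T, 0 ∉ T' → T'.image (2 * ·) ⊆ Tᶜ := by
    intro T' hT' h0 y hy
    obtain ⟨t, ht, rfl⟩ := mem_image.mp hy
    exact mem_compl.mpr fun h => ne_of_mem_of_not_mem ht h0 (hdouble t (hT' ht) h)
  have hcompl : Tᶜ.card = k := by rw [card_compl, hT, ← hk]; omega
  have h0 : 0 ∈ T := by
    by_contra h0
    have := card_le_card (hsub T subset_rfl h0)
    rw [card_image_of_injective _ hinj] at this
    omega
  refine (alternatesUnderDoubling_iff_image_two_mul_eq_compl h2 h0).mpr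
    (eq_of_subset_of_card_le (hsub _ (erase_subset 0 T) (notMem_erase 0 T)) ?_)
  rw [card_image_of_injective _ hinj, card_erase_of_mem h0, hT, hcompl]
  rfl

theorem alternatesUnderDoubling_of_not_isBarycentric (hk : 2 * k + 1 = Fintype.card K)
    {A : Finset K} (hA : A.card = k + 1) (hno : ∀ B ⊆ A, ¬ IsBarycentric k B) :
    AlternatesUnderDoubling (A.map (Equiv.subRight (2 * ∑ x ∈ A, x)).toEmbedding) := by
  have hmem : ∀ x, x ∈ A.map (Equiv.subRight (2 * ∑ x ∈ A, x)).toEmbedding ↔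
      x + 2 * ∑ x ∈ A, x ∈ A := by
    simp [mem_map_equiv]
  refine alternatesUnderDoubling_of_card hk (by rw [card_map, hA]) fun t ht h2t => ?_
  rw [hmem] at ht h2t
  have := eq_two_mul_sum_of_two_mul_sub_mem hk hA hno ht (by convert h2t using 1; ring)
  linear_combination this

theorem exists_isBarycentric_of_card_eq_add_two (hk : 2 * k + 1 = Fintype.card K)
    (h15 : (15 : K) ≠ 0) (A : Finset K) (hA : A.card = k + 2) :
    ∃ B ⊆ A, IsBarycentric k B := by
  classical
  by_contra! hno
  have h2 := two_ne_zero_of_card hk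
  have h3 : (3 : K) ≠ 0 := fun h => h15 (by linear_combination 5 * h)
  set S := ∑ x ∈ A, x
  have hstep : ∀ a ∈ A, 2 * (S - a) ∈ A.erase a := by
    intro a ha
    have hT := alternatesUnderDoubling_of_not_isBarycentric hk (A := A.erase a)
      (by rw [card_erase_of_mem ha, hA]; rfl) fun B hB => hno B (hB.trans (erase_subset a A))
    have h0 := hT.1
    rw [mem_map_equiv, sum_erase_eq_sub ha] at h0
    simpa using h0
  set c := 2 * S / 3
  have hc : 3 * c = 2 * S := mul_div_cancel₀ _ h3
  -- in the coordinate `x = a - c`, the map `a ↦ 2 (S - a)` becomes `x ↦ -2 x`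
  set F := A.map (Equiv.subRight c).toEmbedding
  have hmemF : ∀ x, x ∈ F ↔ x + c ∈ A := by simp [F, mem_map_equiv]
  have hF0 : 0 ∉ F := by
    rw [hmemF, zero_add]
    exact fun hcA => (mem_erase.mp (hstep c hcA)).1 (by linear_combination -hc)
  have hFmul : ∀ x ∈ F, -2 * x ∈ F := by
    intro x hx
    rw [hmemF] at hx ⊢
    convert mem_of_mem_erase (hstep _ hx) using 1
    linear_combination hc
  have hdvd : orderOf (-2 : K) ∣ 4 := by
    have hF : orderOf (-2 : K) ∣ k + 2 := by
      simpa [F, hA] using orderOf_dvd_card_of_mul_mem hF0 (neg_ne_zero.mpr h2) hFmul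
    have hK : orderOf (-2 : K) ∣ 2 * k := by
      apply orderOf_dvd_of_pow_eq_one
      rw [show 2 * k = Fintype.card K - 1 by omega]
      exact FiniteField.pow_card_sub_one_eq_one _ (neg_ne_zero.mpr h2)
    exact (Nat.dvd_add_right hK).mp (by simpa [mul_add] using hF.mul_left 2)
  apply h15
  linear_combination orderOf_dvd_iff_pow_eq_one.mp hdvd

end FiniteField

theorem BO_half (p : ℕ) [Fact p.Prime] (hp : 7 ≤ p) (k : ℕ)
    (hk : 2 * k + 1 = p) :
    (Odd (orderOf (2 : ZMod p)) → BO k (ZMod p) = k + 1) ∧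
    (Even (orderOf (2 : ZMod p)) → BO k (ZMod p) = k + 2) := by
  have hkp : 2 * k + 1 = Fintype.card (ZMod p) := by rw [ZMod.card, hk]
  have h15 : (15 : ZMod p) ≠ 0 := by
    intro h
    have hdvd : p ∣ 3 * 5 := (ZMod.natCast_eq_zero_iff _ _).mp (by exact_mod_cast h)
    rcases (Nat.Prime.dvd_mul Fact.out).mp hdvd with h3 | h5
    · exact absurd (Nat.le_of_dvd (by norm_num) h3) (by omega)
    · exact absurd (Nat.le_of_dvd (by norm_num) h5) (by omega)
  have h3 : (3 : ZMod p) ≠ 0 := fun h => h15 (by linear_combination 5 * h)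
  refine ⟨fun hodd => ?_, fun heven => ?_⟩
  · refine BO_eq_succ_of (fun A hA => ?_) (exists_card_eq_forall_not_isBarycentric hkp h3)
    by_contra! hno
    exact Nat.not_even_iff_odd.mpr hodd
      (alternatesUnderDoubling_of_not_isBarycentric hkp hA hno).even_orderOf_two
  · refine BO_eq_succ_of (exists_isBarycentric_of_card_eq_add_two hkp h15) ?_
    obtain ⟨T, hT⟩ := exists_alternatesUnderDoubling (two_ne_zero_of_card hkp) heven
    exact ⟨T, hT.card_eq hkp, hT.not_isBarycentric hkp h3⟩
end

section
/- Let p ≥ 7 be a prime, k = (p−1)/2, and A ⊆ Z/pZ with |A| = k+1 and σ(A) = 0. If A contains no k-barycentric subset, then (Z/pZ) \ {0} is the disjoint union of (A \ {0}) and (2·A \ {0}). -/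
theorem disjoint_union_of_no_barycentric (p : ℕ) [Fact p.Prime] (hp : 7 ≤ p)
    (k : ℕ) (hk : 2 * k + 1 = p) (A : Finset (ZMod p))
    (hA : A.card = k + 1) (hsum : ∑ x ∈ A, x = 0)
    (hno : ¬ ∃ B ⊆ A, IsBarycentric k B) :
    Disjoint (A.erase 0) ((A.image fun a => 2 * a).erase 0) ∧
      (A.erase 0) ∪ ((A.image fun a => 2 * a).erase 0) = Finset.univ.erase 0 := by
  have hp0 : (p : ℕ) ≠ 0 := by omega
  have h2 : (2 : ZMod p) ≠ 0 := by
    have h : ¬ (p ∣ 2) := fun hd => by have := Nat.le_of_dvd (by norm_num) hd; omega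
    have := (ZMod.natCast_eq_zero_iff 2 p).not.2 h
    simpa using this
  -- key fact
  have key : ∀ a ∈ A, a ≠ 0 → 2 * a ∉ A := by
    intro a ha ha0 h2a
    apply hno
    refine ⟨A.erase a, Finset.erase_subset _ _, ?_, 2 * a, ?_, ?_⟩
    · rw [Finset.card_erase_of_mem ha, hA]; omega
    · refine Finset.mem_erase.2 ⟨?_, h2a⟩
      intro h
      apply ha0
      have : 2 * a - a = 0 := by rw [h]; ring
      simpa [two_mul] using this
    · rw [Finset.sum_erase_eq_sub ha, hsum]
      have hkc : (k : ZMod p) * 2 = -1 := by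
        have : ((2 * k + 1 : ℕ) : ZMod p) = 0 := by rw [hk]; exact ZMod.natCast_self p
        push_cast at this
        linear_combination this
      rw [nsmul_eq_mul]
      linear_combination (-a) * hkc
  have hinj : Function.Injective (fun a : ZMod p => 2 * a) :=
    fun a b h => by
      have := mul_left_cancel₀ h2 h
      exact this
  set B := (A.image fun a => 2 * a) with hB
  have hBcard : B.card = k + 1 := by
    rw [hB, Finset.card_image_of_injective _ hinj, hA]
  have hdisj : Disjoint (A.erase 0) (B.erase 0) := by
    rw [Finset.disjoint_left]
    intro x hx hx'
    obtain ⟨hx0, hxA⟩ := Finset.mem_erase.1 hx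
    obtain ⟨_, hxB⟩ := Finset.mem_erase.1 hx'
    obtain ⟨a, haA, rfl⟩ := Finset.mem_image.1 hxB
    have ha0 : a ≠ 0 := by rintro rfl; simp at hx0
    exact key a haA ha0 hxA
  have hsub : (A.erase 0) ∪ (B.erase 0) ⊆ Finset.univ.erase 0 := by
    intro x hx
    rcases Finset.mem_union.1 hx with h | h
    · exact Finset.mem_erase.2 ⟨(Finset.mem_erase.1 h).1, Finset.mem_univ _⟩
    · exact Finset.mem_erase.2 ⟨(Finset.mem_erase.1 h).1, Finset.mem_univ _⟩
  have hunivcard : (Finset.univ.erase (0 : ZMod p)).card = 2 * k := by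
    rw [Finset.card_erase_of_mem (Finset.mem_univ _), Finset.card_univ, ZMod.card]
    omega
  have h0A : (0 : ZMod p) ∈ A := by
    by_contra h0
    have hAe : A.erase 0 = A := Finset.erase_eq_of_notMem h0
    have h0B : (0 : ZMod p) ∉ B := by
      intro hb
      obtain ⟨a, haA, ha⟩ := Finset.mem_image.1 hb
      have : a = 0 := by
        have := mul_eq_zero.1 ha
        tauto
      exact h0 (this ▸ haA)
    have hBe : B.erase 0 = B := Finset.erase_eq_of_notMem h0B
    have := Finset.card_le_card hsub
    rw [Finset.card_union_of_disjoint hdisj, hAe, hBe, hA, hBcard, hunivcard] at this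
    omega
  have h0B : (0 : ZMod p) ∈ B := Finset.mem_image.2 ⟨0, h0A, by ring⟩
  have hcard : ((A.erase 0) ∪ (B.erase 0)).card = 2 * k := by
    rw [Finset.card_union_of_disjoint hdisj, Finset.card_erase_of_mem h0A,
      Finset.card_erase_of_mem h0B, hA, hBcard]
    omega
  refine ⟨hdisj, Finset.eq_of_subset_of_card_le hsub ?_⟩
  rw [hunivcard, hcard]
end

section
/- Let p ≥ 7 be a prime such that the multiplicative order of 2 modulo p is odd, k = (p−1)/2, and A ⊆ Z/pZ with |A| = k+1. Then A contains a k-barycentric subset. -/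
theorem barycentric_of_odd_order_two (p : ℕ) [Fact p.Prime] (hp : 7 ≤ p)
    (hord : Odd (orderOf (2 : ZMod p))) (k : ℕ) (hk : 2 * k + 1 = p)
    (A : Finset (ZMod p)) (hA : A.card = k + 1) :
    ∃ B ⊆ A, IsBarycentric k B := by
  by_contra hcon
  push_neg at hcon
  have hp2 : (2 : ZMod p) ≠ 0 := by
    have h2 : ((2:ℕ) : ZMod p) ≠ 0 := by
      rw [Ne, ZMod.natCast_eq_zero_iff]
      intro h
      have := Nat.le_of_dvd (by norm_num) h
      omega
    simpa using h2
  set σ : ZMod p := ∑ x ∈ A, x with hσ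
  set f : ZMod p → ZMod p := fun a => 2*a - 2*σ with hf
  have hneg : (2 : ZMod p) * (k : ℕ) = -1 := by
    have h := congrArg (Nat.cast : ℕ → ZMod p) hk
    push_cast at h
    rw [ZMod.natCast_self] at h
    linear_combination h
  have key : ∀ a ∈ A, f a ∈ A → f a = a := by
    intro a ha hfa
    by_contra hne
    apply hcon (A.erase a) (Finset.erase_subset _ _)
    refine ⟨by rw [Finset.card_erase_of_mem ha, hA]; omega, f a,
      Finset.mem_erase.mpr ⟨hne, hfa⟩, ?_⟩
    rw [Finset.sum_erase_eq_sub ha, nsmul_eq_mul]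
    simp only [hf, ← hσ]
    linear_combination (σ - a) * hneg
  have hinj : Function.Injective f := by
    intro x y hxy
    simp only [hf] at hxy
    have h' : (2:ZMod p) * x = 2 * y := by linear_combination hxy
    exact mul_left_cancel₀ hp2 h'
  have hcardim : (A.image f).card = k + 1 := by
    rw [Finset.card_image_of_injective _ hinj, hA]
  have hcard : Fintype.card (ZMod p) = p := ZMod.card p
  have hunion_le : (A ∪ A.image f).card ≤ 2*k+1 := by
    calc (A ∪ A.image f).card ≤ Fintype.card (ZMod p) := Finset.card_le_univ _
    _ = p := hcard
    _ = 2*k+1 := hk.symm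
  have hsum := Finset.card_union_add_card_inter A (A.image f)
  rw [hA, hcardim] at hsum
  have hpos : 0 < (A ∩ A.image f).card := by omega
  obtain ⟨y, hy⟩ := Finset.card_pos.mp hpos
  have hyA : y ∈ A := (Finset.mem_inter.mp hy).1
  obtain ⟨a₀, ha₀A, ha₀y⟩ := Finset.mem_image.mp (Finset.mem_inter.mp hy).2
  have hfix : f a₀ = a₀ := by
    have h1 : f a₀ ∈ A := by rw [ha₀y]; exact hyA
    have h2 := key a₀ ha₀A h1
    exact h2
  have ha2σ : a₀ = 2*σ := by
    simp only [hf] at hfix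
    linear_combination hfix
  have hsub : (A ∩ A.image f) ⊆ {a₀} := by
    intro z hz
    obtain ⟨hzA, hzim⟩ := Finset.mem_inter.mp hz
    obtain ⟨a', ha', hfa'⟩ := Finset.mem_image.mp hzim
    have h1 : f a' = a' := key a' ha' (by rw [hfa']; exact hzA)
    have hz' : z = a' := by rw [← hfa', h1]
    have hz2 : z = 2*σ := by
      have h2 : f z = z := by rw [hz']; exact h1
      simp only [hf] at h2
      linear_combination h2
    simp [hz2, ha2σ]
  have hinter_le : (A ∩ A.image f).card ≤ 1 := by
    calc _ ≤ ({a₀} : Finset (ZMod p)).card := Finset.card_le_card hsub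
    _ = 1 := Finset.card_singleton _
  have huniv : A ∪ A.image f = Finset.univ := by
    apply Finset.eq_univ_of_card
    rw [hcard]
    omega
  have P : ∀ x : ZMod p, x ≠ 0 → ((x + a₀ ∈ A) ↔ ¬(2*x + a₀ ∈ A)) := by
    intro x hx
    constructor
    · intro h1 h2
      have hfeq : f (x + a₀) = 2*x + a₀ := by
        simp only [hf]
        linear_combination ha2σ
      have h3 : f (x + a₀) ∈ A := by rw [hfeq]; exact h2
      have h4 := key (x + a₀) h1 h3
      rw [hfeq] at h4
      exact hx (by linear_combination h4)
    · intro h2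
      have hmem : 2*x + a₀ ∈ A ∪ A.image f := by rw [huniv]; exact Finset.mem_univ _
      rcases Finset.mem_union.mp hmem with h | h
      · exact absurd h h2
      · obtain ⟨a', ha', hfa'⟩ := Finset.mem_image.mp h
        simp only [hf] at hfa'
        have h3 : (2:ZMod p) * (x + a₀) = 2 * a' := by
          linear_combination -hfa' + ha2σ
        have h4 : x + a₀ = a' := mul_left_cancel₀ hp2 h3
        rw [h4]; exact ha'
  have Q : ∀ n : ℕ, ∀ x : ZMod p, x ≠ 0 →
      ((2^n * x + a₀ ∈ A) ↔ (Even n ↔ x + a₀ ∈ A)) := by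
    intro n
    induction n with
    | zero => intro x hx; simp
    | succ n ih =>
      intro x hx
      have hxn : (2:ZMod p)^n * x ≠ 0 := mul_ne_zero (pow_ne_zero _ hp2) hx
      have h1 := P (2^n * x) hxn
      have h2 := ih x hx
      have heq : (2:ZMod p)^(n+1) * x = 2 * (2^n * x) := by ring
      rw [heq, Nat.even_add_one]
      tauto
  have hone : (1 : ZMod p) ≠ 0 := one_ne_zero
  have ht := Q (orderOf (2 : ZMod p)) 1 hone
  rw [pow_orderOf_eq_one, one_mul] at ht
  rw [← Nat.not_even_iff_odd] at hord
  tauto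
end

section
/- Let p ≥ 7 be a prime, k = (p−1)/2, and C ⊆ Z/pZ with |C| = k+2. Then C contains a k-barycentric subset. -/
theorem barycentric_of_card_add_two (p : ℕ) [Fact p.Prime] (hp : 7 ≤ p)
    (k : ℕ) (hk : 2 * k + 1 = p) (C : Finset (ZMod p)) (hC : C.card = k + 2) :
    ∃ B ⊆ C, IsBarycentric k B := by
  have hpp : p.Prime := Fact.out
  have h2 : (2 : ZMod p) ≠ 0 := by
    have : ((2 : ℕ) : ZMod p) ≠ 0 := by
      rw [Ne, ZMod.natCast_eq_zero_iff]
      intro h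
      exact absurd (Nat.le_of_dvd (by norm_num) h) (by omega)
    simpa using this
  have h3 : (3 : ZMod p) ≠ 0 := by
    have : ((3 : ℕ) : ZMod p) ≠ 0 := by
      rw [Ne, ZMod.natCast_eq_zero_iff]
      intro h
      exact absurd (Nat.le_of_dvd (by norm_num) h) (by omega)
    simpa using this
  have h2i : (2 : ZMod p) * 2⁻¹ = 1 := mul_inv_cancel₀ h2
  set σ : ZMod p := ∑ x ∈ C, x with hσ
  by_contra hcon
  push_neg at hcon
  -- cast fact : 2k = -1 in ZMod p
  have hcast : (2 : ZMod p) * (k : ZMod p) = -1 := by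
    have h0 : ((2 * k + 1 : ℕ) : ZMod p) = 0 := by rw [hk]; exact ZMod.natCast_self p
    push_cast at h0
    linear_combination h0
  -- main consequence of hcon
  have hmain : ∀ a b : ZMod p, a ∈ C → b ∈ C → a ≠ b →
      2*a + 2*b - 2*σ ∈ C → 2*a + 2*b - 2*σ = a ∨ 2*a + 2*b - 2*σ = b := by
    intro a b ha hb hab hgC
    by_contra hne
    push_neg at hne
    obtain ⟨hga, hgb⟩ := hne
    set g : ZMod p := 2*a + 2*b - 2*σ with hgdef
    set B : Finset (ZMod p) := (C.erase a).erase b with hB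
    have hBsub : B ⊆ C := (Finset.erase_subset _ _).trans (Finset.erase_subset _ _)
    have hbmem : b ∈ C.erase a := Finset.mem_erase.mpr ⟨hab.symm, hb⟩
    have hcard : B.card = k := by
      rw [hB, Finset.card_erase_of_mem hbmem, Finset.card_erase_of_mem ha, hC]
      omega
    have hgB : g ∈ B := by
      rw [hB]
      exact Finset.mem_erase.mpr ⟨hgb, Finset.mem_erase.mpr ⟨hga, hgC⟩⟩
    have e1 : (∑ x ∈ C.erase a, x) + a = σ := Finset.sum_erase_add _ _ ha
    have e2 : (∑ x ∈ B, x) + b = ∑ x ∈ C.erase a, x := Finset.sum_erase_add _ _ hbmem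
    have hsum : ∑ x ∈ B, x = σ - a - b := by
      rw [← e1, ← e2]; ring
    have hkg : (k : ZMod p) * g = σ - a - b := by
      apply mul_left_cancel₀ h2
      rw [hgdef]
      linear_combination (2*a + 2*b - 2*σ) * hcast
    refine hcon B hBsub ⟨hcard, g, hgB, ?_⟩
    rw [hsum, nsmul_eq_mul, hkg]
  -- for each g ∈ C, structure of solutions
  have hmain2 : ∀ g ∈ C, (σ - g/2 ∈ C ∧ g ≠ 2*σ/3) := by
    intro g hg
    set t : ZMod p := σ + g/2 with ht
    set S : Finset (ZMod p) := C ∩ C.image (fun x => t - x) with hS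
    have himg : (C.image (fun x => t - x)).card = C.card :=
      Finset.card_image_of_injective _ (fun x y h => by rwa [sub_right_inj] at h)
    have hunion : (C ∪ C.image (fun x => t - x)).card ≤ p := by
      calc (C ∪ C.image (fun x => t - x)).card ≤ (Finset.univ : Finset (ZMod p)).card :=
            Finset.card_le_univ _
        _ = p := by rw [Finset.card_univ, ZMod.card]
    have hS3 : 3 ≤ S.card := by
      have h := Finset.card_inter_add_card_union C (C.image (fun x => t - x))
      rw [← hS] at h
      omega
    set Bad : Finset (ZMod p) := {g, t - g, t/2} with hBad
    have hSB : S ⊆ Bad := by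
      intro a haS
      rw [hS, Finset.mem_inter] at haS
      obtain ⟨haC, haI⟩ := haS
      obtain ⟨x, hxC, hxa⟩ := Finset.mem_image.mp haI
      by_contra hbad
      rw [hBad] at hbad
      simp only [Finset.mem_insert, Finset.mem_singleton] at hbad
      push_neg at hbad
      obtain ⟨hag, hatg, hat2⟩ := hbad
      have hbC : t - a ∈ C := by rwa [← hxa, sub_sub_cancel]
      have hab : a ≠ t - a := by
        intro h
        apply hat2
        rw [eq_div_iff h2]
        linear_combination h
      have hgeq : 2*a + 2*(t - a) - 2*σ = g := by
        rw [ht]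
        field_simp
        ring
      have := hmain a (t - a) haC hbC hab (by rw [hgeq]; exact hg)
      rw [hgeq] at this
      rcases this with h | h
      · exact hag h.symm
      · apply hatg
        linear_combination h
    have hBad3 : Bad.card ≤ 3 := by
      rw [hBad]
      have hA := Finset.card_insert_le (t - g) ({t/2} : Finset (ZMod p))
      have hB2 := Finset.card_insert_le g (insert (t - g) ({t/2} : Finset (ZMod p)))
      have hs : ({t/2} : Finset (ZMod p)).card = 1 := Finset.card_singleton _
      omega
    have hEq : S = Bad := Finset.eq_of_subset_of_card_le hSB (le_trans hBad3 hS3)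
    have htgC : t - g ∈ C := by
      have : t - g ∈ S := by
        rw [hEq, hBad]
        simp
      rw [hS, Finset.mem_inter] at this
      exact this.1
    constructor
    · have : t - g = σ - g/2 := by rw [ht]; linear_combination g * h2i
      rwa [this] at htgC
    · intro hgf
      have htg : t - g = g := by
        rw [ht, hgf]
        field_simp
        ring
      have hle2 : Bad.card ≤ 2 := by
        rw [hBad, htg, Finset.insert_idem]
        have hA := Finset.card_insert_le g ({t/2} : Finset (ZMod p))
        have hs : ({t/2} : Finset (ZMod p)).card = 1 := Finset.card_singleton _
        omega
      rw [← hEq] at hle2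
      omega
  -- translate so the fixed point is at 0
  set f : ZMod p := 2*σ/3 with hf
  set D : Finset (ZMod p) := C.image (fun x => x - f) with hD
  have hDcard : D.card = k + 2 := by
    rw [hD, Finset.card_image_of_injective _ (fun x y h => by rwa [sub_left_inj] at h), hC]
  have h0D : (0 : ZMod p) ∉ D := by
    intro h
    rw [hD] at h
    obtain ⟨c, hc, hc0⟩ := Finset.mem_image.mp h
    exact (hmain2 c hc).2 (sub_eq_zero.mp hc0)
  set u : ZMod p := -(1/2) with hu
  have hu0 : u ≠ 0 := by
    rw [hu]
    exact neg_ne_zero.mpr (div_ne_zero one_ne_zero h2)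
  have hclosed : ∀ x ∈ D, u * x ∈ D := by
    intro x hx
    rw [hD] at hx ⊢
    obtain ⟨c, hc, hcx⟩ := Finset.mem_image.mp hx
    refine Finset.mem_image.mpr ⟨σ - c/2, (hmain2 c hc).1, ?_⟩
    rw [← hcx, hf, hu]
    field_simp
    ring
  have himage : D.image (fun x => u * x) = D := by
    apply Finset.eq_of_subset_of_card_le
    · intro y hy
      obtain ⟨x, hx, rfl⟩ := Finset.mem_image.mp hy
      exact hclosed x hx
    · rw [Finset.card_image_of_injective _ (mul_right_injective₀ hu0)]
  have hprodne : (∏ x ∈ D, x) ≠ 0 :=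
    Finset.prod_ne_zero_iff.mpr (fun x hx h0 => h0D (h0 ▸ hx))
  have hupow : u ^ (k + 2) = 1 := by
    have h1 : ∏ x ∈ D, x = ∏ x ∈ D, u * x := by
      conv_lhs => rw [← himage]
      exact Finset.prod_image (fun x _ y _ h => mul_left_cancel₀ hu0 h)
    rw [Finset.prod_mul_distrib, Finset.prod_const, hDcard] at h1
    have := mul_right_cancel₀ hprodne (show (1 : ZMod p) * ∏ x ∈ D, x = u ^ (k+2) * ∏ x ∈ D, x by
      rw [one_mul, ← h1])
    exact this.symm
  have hu2k : u ^ (2 * k) = 1 := by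
    have := ZMod.pow_card_sub_one_eq_one hu0
    rwa [show p - 1 = 2 * k by omega] at this
  have hu4 : u ^ 4 = 1 := by
    have h24 : u ^ (2 * (k + 2)) = 1 := by
      rw [mul_comm, pow_mul, hupow, one_pow]
    have : u ^ (2 * k) * u ^ 4 = u ^ (2 * (k + 2)) := by
      rw [← pow_add]
      congr 1
    rw [hu2k, one_mul, h24] at this
    exact this
  have h16 : (16 : ZMod p) = 1 := by
    have hm : ((-(1/2) : ZMod p) * 2) = -1 := by
      field_simp
    have : ((-(1/2) : ZMod p) * 2) ^ 4 = u ^ 4 * 16 := by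
      rw [hu]; ring
    rw [hm, hu4, one_mul] at this
    linear_combination -this
  have h15 : ((15 : ℕ) : ZMod p) = 0 := by
    push_cast
    linear_combination h16
  have hdvd : p ∣ 15 := (ZMod.natCast_eq_zero_iff 15 p).mp h15
  have h35 : p ∣ 3 * 5 := by norm_num at hdvd ⊢; exact hdvd
  rcases (Nat.Prime.dvd_mul hpp).mp h35 with h | h
  · exact absurd ((Nat.prime_dvd_prime_iff_eq hpp (by norm_num)).mp h) (by omega)
  · exact absurd ((Nat.prime_dvd_prime_iff_eq hpp (by norm_num)).mp h) (by omega)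
end

section
/- Let n ≥ 6 and k be coprime integers with 3 ≤ k ≤ n−3. Then there exists a subset of Z/nZ of cardinality k that is not k-barycentric; consequently BO(k, Z/nZ) ≥ k+1. -/
lemma sum_Icc_mul_two (a b : ℕ) : (∑ i ∈ Finset.Icc (a+1) (a+b), i) * 2 = b * (2*a + b + 1) := by
  induction b with
  | zero => simp
  | succ m ih =>
    rw [show a + (m+1) = (a+m)+1 by ring, Finset.sum_Icc_succ_top (by omega)]
    zify at ih ⊢
    linear_combination ih

lemma exists_zero_sum (n k : ℕ) (hn : 6 ≤ n) (hk3 : 3 ≤ k) (hkn : k + 3 ≤ n) :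
    ∃ A : Finset ℕ, A.card = k ∧ (∀ a ∈ A, 0 < a ∧ a < n) ∧ n ∣ ∑ a ∈ A, a := by
  -- Smin = k(k+1)/2, the minimal possible sum
  set Smin := k * (k+1) / 2 with hSmin
  have hSmin2 : Smin * 2 = k * (k+1) :=
    Nat.div_mul_cancel ((Nat.even_mul_succ_self k).two_dvd)
  set r := (if Smin % n = 0 then 0 else n - Smin % n) with hrdef
  have hmodlt : Smin % n < n := Nat.mod_lt _ (by omega)
  have hdm := Nat.div_add_mod Smin n
  have hr : r < n := by
    rw [hrdef]; split_ifs with h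
    · omega
    · omega
  have hdvd : n ∣ Smin + r := by
    rw [hrdef]; split_ifs with h
    · exact ⟨Smin / n, by omega⟩
    · refine ⟨Smin / n + 1, ?_⟩
      have : n * (Smin / n + 1) = n * (Smin / n) + n := by ring
      omega
  obtain ⟨D, hD, hD2⟩ : ∃ D, n = k + 1 + D ∧ 2 ≤ D := ⟨n - k - 1, by omega, by omega⟩
  have hkD : k + D ≤ k * D := by nlinarith
  have hrKD : r ≤ k * D := by omega
  obtain ⟨q, s, hqk, hsD, hqs⟩ : ∃ q s, q + 1 ≤ k ∧ s ≤ D ∧ q * D + s = r := by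
    have hdm2 := Nat.div_add_mod r D
    have hm2 : r % D < D := Nat.mod_lt _ (by omega)
    have hcomm : (r / D) * D = D * (r / D) := Nat.mul_comm _ _
    rcases le_or_gt (r / D) (k - 1) with h | h
    · exact ⟨r / D, r % D, by omega, by omega, by omega⟩
    · have hk' : k ≤ r / D := by omega
      have h2 : k * D ≤ (r / D) * D := Nat.mul_le_mul_right _ hk'
      have h3 : r = k * D := by omega
      refine ⟨k - 1, D, by omega, le_rfl, ?_⟩
      obtain ⟨k', rfl⟩ : ∃ k', k = k' + 1 := ⟨k - 1, by omega⟩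
      simp only [Nat.add_sub_cancel]
      have : (k' + 1) * D = k' * D + D := by ring
      omega
  obtain ⟨b, hb⟩ : ∃ b, k = b + q + 1 := ⟨k - q - 1, by omega⟩
  set u := b + 1 + D with hu
  refine ⟨(Finset.Icc 1 b ∪ {b + 1 + s}) ∪ Finset.Icc (u+1) (u+q), ?_, ?_, ?_⟩
  · -- cardinality
    have d1 : Disjoint (Finset.Icc 1 b) ({b + 1 + s} : Finset ℕ) := by
      simp only [Finset.disjoint_left, Finset.mem_Icc, Finset.mem_singleton]
      omega
    have d2 : Disjoint (Finset.Icc 1 b ∪ {b + 1 + s}) (Finset.Icc (u+1) (u+q)) := by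
      simp only [Finset.disjoint_left, Finset.mem_union, Finset.mem_Icc,
        Finset.mem_singleton]
      omega
    rw [Finset.card_union_of_disjoint d2, Finset.card_union_of_disjoint d1,
      Finset.card_singleton, Nat.card_Icc, Nat.card_Icc]
    omega
  · -- bounds
    intro a ha
    simp only [Finset.mem_union, Finset.mem_Icc, Finset.mem_singleton] at ha
    omega
  · -- sum
    have d1 : Disjoint (Finset.Icc 1 b) ({b + 1 + s} : Finset ℕ) := by
      simp only [Finset.disjoint_left, Finset.mem_Icc, Finset.mem_singleton]
      omega
    have d2 : Disjoint (Finset.Icc 1 b ∪ {b + 1 + s}) (Finset.Icc (u+1) (u+q)) := by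
      simp only [Finset.disjoint_left, Finset.mem_union, Finset.mem_Icc,
        Finset.mem_singleton]
      omega
    rw [Finset.sum_union d2, Finset.sum_union d1, Finset.sum_singleton]
    have g1 : (∑ i ∈ Finset.Icc 1 b, i) * 2 = b * (b + 1) := by
      have := sum_Icc_mul_two 0 b
      simpa using this
    have g2 : (∑ i ∈ Finset.Icc (u+1) (u+q), i) * 2 = q * (2*u + q + 1) :=
      sum_Icc_mul_two u q
    have key : (∑ i ∈ Finset.Icc 1 b, i + (b + 1 + s) +
        ∑ i ∈ Finset.Icc (u+1) (u+q), i) * 2 = (Smin + r) * 2 := by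
      have hr2 : (Smin + r) * 2 = k * (k+1) + (q * D + s) * 2 := by omega
      rw [hr2, hb]
      have hu' : (u : ℤ) = (b : ℤ) + 1 + (D : ℤ) := by exact_mod_cast hu
      zify at g1 g2 ⊢
      linear_combination g1 + g2 + 2 * (q : ℤ) * hu'
    have hsum : (∑ i ∈ Finset.Icc 1 b, i + (b + 1 + s) +
        ∑ i ∈ Finset.Icc (u+1) (u+q), i) = Smin + r := by omega
    rw [hsum]
    exact hdvd

theorem exists_non_barycentric (n k : ℕ) [NeZero n] (hn : 6 ≤ n)
    (hk3 : 3 ≤ k) (hkn : k ≤ n - 3) (hcop : Nat.Coprime n k) :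
    (∃ S : Finset (ZMod n), S.card = k ∧ ¬ IsBarycentric k S) ∧
      k + 1 ≤ BO k (ZMod n) := by
  obtain ⟨A, hcard, hbound, hdvd⟩ := exists_zero_sum n k hn hk3 (by omega)
  have hinj : Set.InjOn (Nat.cast : ℕ → ZMod n) A := by
    intro a ha b hb hab
    have ha' := (hbound a ha).2
    have hb' := (hbound b hb).2
    have := congrArg ZMod.val hab
    rwa [ZMod.val_cast_of_lt ha', ZMod.val_cast_of_lt hb'] at this
  set S : Finset (ZMod n) := A.image (Nat.cast : ℕ → ZMod n) with hS
  have hScard : S.card = k := by rw [hS, Finset.card_image_of_injOn hinj, hcard]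
  have hSsum : ∑ x ∈ S, x = 0 := by
    rw [hS, Finset.sum_image (fun a ha b hb => hinj ha hb)]
    rw [← Nat.cast_sum]
    exact (ZMod.natCast_eq_zero_iff _ _).mpr hdvd
  have hzero : (0 : ZMod n) ∉ S := by
    rw [hS]
    simp only [Finset.mem_image, not_exists]
    rintro a ⟨ha, ha0⟩
    have := (ZMod.natCast_eq_zero_iff a n).mp ha0
    have h1 := (hbound a ha).1
    have h2 := (hbound a ha).2
    have := Nat.le_of_dvd h1 this
    omega
  have hnb : ¬ IsBarycentric k S := by
    rintro ⟨_, g, hg, hsum⟩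
    rw [hSsum] at hsum
    have hk : IsUnit (k : ZMod n) := (ZMod.isUnit_iff_coprime k n).mpr hcop.symm
    have : g = 0 := by
      have := hsum.symm
      rw [nsmul_eq_mul] at this
      exact (hk.mul_right_eq_zero).mp this
    rw [this] at hg
    exact hzero hg
  refine ⟨⟨S, hScard, hnb⟩, ?_⟩
  refine le_csInf ⟨n + 1, fun A hA => absurd hA ?_⟩ ?_
  · push_neg
    have := Finset.card_le_univ A
    rw [ZMod.card] at this
    omega
  · intro ℓ hℓ
    by_contra hcon
    push_neg at hcon
    obtain ⟨B, hBS, hB⟩ := hℓ S (by omega)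
    have hBc := hB.1
    have : B = S := Finset.eq_of_subset_of_card_le hBS (by omega)
    rw [this] at hB
    exact hnb hB
end

section
/- Let n ≥ 6 and k be integers with 3 ≤ k ≤ n−3. Then for every positive integer m, BO(k, Z/nZ) ≥ (1/m)·(((n/k)^{1/m} − k)/(k−1))^{m−2}. -/
private lemma digits_key {b m : ℕ} (d : Fin (m+1) → ℕ) :
    ∑ i : Fin (m+1), d i * b ^ (i : ℕ)
      = d 0 + b * ∑ i : Fin m, d i.succ * b ^ (i : ℕ) := by
  rw [Fin.sum_univ_succ, Finset.mul_sum]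
  simp only [Fin.val_zero, pow_zero, mul_one, Fin.val_succ, pow_succ]
  congr 1
  exact Finset.sum_congr rfl fun i _ => by ring

lemma digits_lt {b : ℕ} : ∀ {m : ℕ} (d : Fin m → ℕ), (∀ i, d i < b) →
    ∑ i, d i * b ^ (i : ℕ) < b ^ m := by
  intro m
  induction m with
  | zero => intro d _; simp
  | succ m ih =>
    intro d hd
    rw [digits_key, pow_succ]
    have h1 := ih (fun i => d i.succ) (fun i => hd i.succ)
    have h2 := hd 0
    have h3 : b * (∑ i : Fin m, d i.succ * b ^ (i:ℕ)) + b ≤ b * b ^ m := by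
      calc b * (∑ i : Fin m, d i.succ * b ^ (i:ℕ)) + b
          = b * ((∑ i : Fin m, d i.succ * b ^ (i:ℕ)) + 1) := by ring
        _ ≤ b * b ^ m := Nat.mul_le_mul_left b h1
    have : b * b ^ m = b ^ m * b := by ring
    omega

lemma digits_unique {b : ℕ} : ∀ {m : ℕ} (d e : Fin m → ℕ), (∀ i, d i < b) → (∀ i, e i < b) →
    (∑ i, d i * b ^ (i : ℕ)) = (∑ i, e i * b ^ (i : ℕ)) → ∀ i, d i = e i := by
  intro m
  induction m with
  | zero => intro d e _ _ _ i; exact absurd i.2 (by simp)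
  | succ m ih =>
    intro d e hd he h
    rw [digits_key, digits_key] at h
    have hb : 0 < b := lt_of_le_of_lt (Nat.zero_le _) (hd 0)
    have h0 : d 0 = e 0 := by
      have := congrArg (· % b) h
      simpa [Nat.add_mul_mod_self_left, Nat.mod_eq_of_lt (hd 0),
        Nat.mod_eq_of_lt (he 0)] using this
    have hrest : (∑ i : Fin m, d i.succ * b ^ (i:ℕ)) = ∑ i : Fin m, e i.succ * b ^ (i:ℕ) := by
      rw [h0] at h
      have := Nat.add_left_cancel h
      exact Nat.eq_of_mul_eq_mul_left hb this
    intro i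
    refine Fin.cases ?_ ?_ i
    · exact h0
    · intro j
      exact ih (fun i => d i.succ) (fun i => e i.succ) (fun i => hd i.succ)
        (fun i => he i.succ) hrest j

lemma variance_id {α : Type*} (T : Finset α) (x : α → ℤ) :
    ∑ a ∈ T, ∑ c ∈ T, (x a - x c)^2
      = 2 * T.card * (∑ a ∈ T, (x a)^2) - 2 * (∑ a ∈ T, x a)^2 := by
  have inner : ∀ a, ∑ c ∈ T, (x a - x c)^2
      = (T.card : ℤ) * (x a)^2 - 2 * x a * (∑ c ∈ T, x c) + ∑ c ∈ T, (x c)^2 := by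
    intro a
    have h : ∀ c, (x a - x c)^2 = (x a)^2 - (2 * x a) * x c + (x c)^2 := fun c => by ring
    simp only [h, Finset.sum_add_distrib, Finset.sum_sub_distrib, Finset.sum_const,
      nsmul_eq_mul, ← Finset.mul_sum]
  rw [Finset.sum_congr rfl (fun a _ => inner a), Finset.sum_add_distrib,
    Finset.sum_sub_distrib, Finset.sum_const, nsmul_eq_mul, ← Finset.mul_sum,
    ← Finset.sum_mul]
  have h2 : ∑ i ∈ T, 2 * x i = 2 * ∑ i ∈ T, x i := by rw [Finset.mul_sum]
  rw [h2]
  ring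

lemma lt_BO {n k : ℕ} [NeZero n] (A : Finset (ZMod n))
    (hA : ∀ B ⊆ A, ¬ IsBarycentric k B) : A.card < BO k (ZMod n) := by
  have hne : {ℓ : ℕ | ∀ C : Finset (ZMod n), ℓ ≤ C.card → ∃ B ⊆ C, IsBarycentric k B}.Nonempty := by
    refine ⟨Fintype.card (ZMod n) + 1, fun C hC => absurd (Finset.card_le_univ C) ?_⟩
    omega
  have hmem := Nat.sInf_mem hne
  by_contra h
  push_neg at h
  obtain ⟨B, hB, hbar⟩ := hmem A h
  exact hA B hB hbar

lemma behrend_construction (n k m s : ℕ) [NeZero n] (hk3 : 3 ≤ k) (hm : 0 < m)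
    (hs : 1 ≤ s) (hbn : k * ((k-1)*(s-1)+1) ^ m ≤ n) :
    ∃ A : Finset (ZMod n), (∀ B ⊆ A, ¬ IsBarycentric k B) ∧
      s ^ m ≤ (m * (s-1)^2 + 1) * A.card := by
  set b := (k-1)*(s-1)+1 with hb
  haveI : NeZero s := ⟨by omega⟩
  haveI : Nonempty (Fin s) := ⟨⟨0, by omega⟩⟩
  have hsb : s ≤ b := by
    have h1 : 1 * (s-1) ≤ (k-1) * (s-1) := Nat.mul_le_mul_right _ (by omega)
    omega
  have hdig : ∀ (f : Fin m → Fin s) (i : Fin m), (f i : ℕ) < b :=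
    fun f i => lt_of_lt_of_le (f i).2 hsb
  set ν : (Fin m → Fin s) → ℕ := fun f => ∑ i, (f i : ℕ) * b ^ (i : ℕ) with hν
  have hν_lt : ∀ f, ν f < b ^ m := fun f => digits_lt _ (hdig f)
  have hP1 : 1 ≤ b ^ m := Nat.one_le_pow _ _ (by omega)
  have hbm_n : b ^ m ≤ n := le_trans (Nat.le_mul_of_pos_left _ (by omega)) hbn
  set r : (Fin m → Fin s) → ℕ := fun f => ∑ i, (f i : ℕ)^2 with hr
  have hr_le : ∀ f, r f ≤ m * (s-1)^2 := by
    intro f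
    calc r f ≤ Finset.univ.card • ((s-1)^2) :=
          Finset.sum_le_card_nsmul _ _ _ (fun i _ =>
            Nat.pow_le_pow_left (by have := (f i).2; omega) 2)
      _ = m * (s-1)^2 := by simp [smul_eq_mul]
  set R : Finset ℕ := Finset.univ.image r with hR
  have hRne : R.Nonempty := Finset.Nonempty.image Finset.univ_nonempty _
  obtain ⟨r0, hr0R, hmax⟩ := R.exists_max_image
    (fun v => (Finset.univ.filter (fun f => r f = v)).card) hRne
  set S : Finset (Fin m → Fin s) := Finset.univ.filter (fun f => r f = r0) with hS
  set φ : (Fin m → Fin s) → ZMod n := fun f => ((ν f : ℕ) : ZMod n) with hφ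
  have hinj : ∀ f f' : Fin m → Fin s, φ f = φ f' → f = f' := by
    intro f f' h
    have hv := congrArg ZMod.val h
    rw [ZMod.val_cast_of_lt (lt_of_lt_of_le (hν_lt f) hbm_n),
      ZMod.val_cast_of_lt (lt_of_lt_of_le (hν_lt f') hbm_n)] at hv
    funext i
    exact Fin.val_injective (digits_unique _ _ (hdig f) (hdig f') hv i)
  refine ⟨S.image φ, ?_, ?_⟩
  · -- freeness
    rintro B hBA ⟨hcardB, g, hgB, hsum⟩
    obtain ⟨T, hTS, hTim⟩ := Finset.subset_image_iff.mp hBA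
    have hinjT : ∀ f ∈ T, ∀ f' ∈ T, φ f = φ f' → f = f' := fun f _ f' _ h => hinj f f' h
    have hcardT : T.card = k := by
      rw [← hcardB, ← hTim, Finset.card_image_of_injOn (fun f hf f' hf' h => hinj f f' h)]
    obtain ⟨f0, hf0T, hφf0⟩ := Finset.mem_image.mp (hTim ▸ hgB)
    have hsumT : ∑ f ∈ T, φ f = k • g := by
      rw [← hsum, ← hTim, Finset.sum_image hinjT]
    set T' := T.erase f0 with hT'
    have hcardT' : T'.card = k - 1 := by rw [hT', Finset.card_erase_of_mem hf0T, hcardT]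
    have hsum' : ∑ f ∈ T', φ f = (k-1) • g := by
      have h1 := Finset.sum_erase_add T φ hf0T
      have h2 : k • g = (k-1) • g + g := by
        nth_rewrite 1 [show k = (k-1)+1 by omega]
        rw [succ_nsmul]
      rw [hsumT, hφf0, h2] at h1
      exact add_right_cancel h1
    -- to ℕ
    set N1 := ∑ f ∈ T', ν f with hN1
    set N2 := (k-1) * ν f0 with hN2
    have hZ : ((N1 : ℕ) : ZMod n) = ((N2 : ℕ) : ZMod n) := by
      have hL : ((N1 : ℕ) : ZMod n) = ∑ f ∈ T', φ f := by rw [hN1, Nat.cast_sum]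
      have hRe : ((N2 : ℕ) : ZMod n) = (k-1) • φ f0 := by
        rw [hN2, Nat.cast_mul, nsmul_eq_mul]
      rw [hL, hRe, hφf0]
      exact hsum'
    have hN1lt : N1 < n := by
      have h1 : N1 ≤ T'.card • (b^m - 1) :=
        Finset.sum_le_card_nsmul _ _ _ (fun f _ => Nat.le_sub_one_of_lt (hν_lt f))
      rw [hcardT', smul_eq_mul] at h1
      have h2 : (k-1) * (b^m - 1) ≤ (k-1) * b^m := Nat.mul_le_mul_left _ (Nat.sub_le _ _)
      have h3 : (k-1) * b^m < k * b^m :=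
        (Nat.mul_lt_mul_right (show 0 < b^m by omega)).mpr (by omega)
      omega
    have hN2lt : N2 < n := by
      have h2 : (k-1) * ν f0 ≤ (k-1) * b^m := Nat.mul_le_mul_left _ (le_of_lt (hν_lt f0))
      have h3 : (k-1) * b^m < k * b^m :=
        (Nat.mul_lt_mul_right (show 0 < b^m by omega)).mpr (by omega)
      omega
    have hNat : N1 = N2 := by
      have := congrArg ZMod.val hZ
      rwa [ZMod.val_cast_of_lt hN1lt, ZMod.val_cast_of_lt hN2lt] at this
    -- digit equality
    set d : Fin m → ℕ := fun i => ∑ f ∈ T', (f i : ℕ) with hd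
    set e : Fin m → ℕ := fun i => (k-1) * (f0 i : ℕ) with he
    have hdlt : ∀ i, d i < b := by
      intro i
      have h1 : ∑ f ∈ T', (f i : ℕ) ≤ T'.card • (s-1) :=
        Finset.sum_le_card_nsmul _ _ _ (fun f _ => by have := (f i).2; omega)
      rw [hcardT', smul_eq_mul] at h1
      exact Nat.lt_succ_of_le h1
    have helt : ∀ i, e i < b := by
      intro i
      have h1 : (k-1) * (f0 i : ℕ) ≤ (k-1)*(s-1) :=
        Nat.mul_le_mul_left _ (by have := (f0 i).2; omega)
      exact Nat.lt_succ_of_le h1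
    have hdigsum : ∑ i, d i * b ^ (i:ℕ) = ∑ i, e i * b ^ (i:ℕ) := by
      have hL : ∑ i, d i * b ^ (i:ℕ) = N1 := by
        rw [hN1]
        simp only [hd, hν, Finset.sum_mul]
        exact Finset.sum_comm
      have hRes : ∑ i, e i * b ^ (i:ℕ) = N2 := by
        rw [hN2, hν]
        simp only [he, Finset.mul_sum]
        exact Finset.sum_congr rfl (fun i _ => by ring)
      rw [hL, hRes, hNat]
    have hdi : ∀ i, d i = e i := digits_unique d e hdlt helt hdigsum
    -- variance argument
    have hrT' : ∀ f ∈ T', r f = r0 := by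
      intro f hf
      have : f ∈ S := hTS (Finset.mem_of_mem_erase hf)
      exact (Finset.mem_filter.mp this).2
    have hrf0 : r f0 = r0 := (Finset.mem_filter.mp (hTS hf0T)).2
    have hvar : ∑ i : Fin m, ∑ f ∈ T', ∑ f' ∈ T', ((f i : ℤ) - (f' i : ℤ))^2 = 0 := by
      have step : ∀ i : Fin m, ∑ f ∈ T', ∑ f' ∈ T', ((f i : ℤ) - (f' i : ℤ))^2
          = 2 * (k-1 : ℕ) * (∑ f ∈ T', ((f i : ℕ) : ℤ)^2)
            - 2 * (((k-1) * (f0 i : ℕ) : ℕ) : ℤ)^2 := by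
        intro i
        rw [variance_id T' (fun f => ((f i : ℕ) : ℤ)), hcardT']
        congr 2
        have : ∑ f ∈ T', ((f i : ℕ) : ℤ) = ((d i : ℕ) : ℤ) := by
          rw [hd]; push_cast; rfl
        rw [this, hdi i, he]
      simp only [step]
      rw [Finset.sum_sub_distrib, ← Finset.mul_sum, ← Finset.mul_sum]
      have hA : ∑ i : Fin m, ∑ f ∈ T', ((f i : ℕ):ℤ)^2 = ((k-1) * r0 : ℕ) := by
        rw [Finset.sum_comm]
        have : ∀ f ∈ T', ∑ i : Fin m, ((f i : ℕ):ℤ)^2 = (r0 : ℤ) := by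
          intro f hf
          rw [← hrT' f hf, hr]
          push_cast
          rfl
        rw [Finset.sum_congr rfl this, Finset.sum_const, hcardT', nsmul_eq_mul,
          Nat.cast_mul]
      have hf0sq : ((r f0 : ℕ) : ℤ) = ∑ i : Fin m, ((f0 i : ℕ) : ℤ)^2 := by
        rw [hr]; push_cast; rfl
      have hB : ∑ i : Fin m, (((k-1) * (f0 i : ℕ) : ℕ) : ℤ)^2
          = (((k-1 : ℕ)):ℤ)^2 * (r0 : ℤ) := by
        calc ∑ i : Fin m, (((k-1) * (f0 i : ℕ) : ℕ) : ℤ)^2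
            = ∑ i : Fin m, ((k-1:ℕ):ℤ)^2 * ((f0 i : ℕ):ℤ)^2 :=
              Finset.sum_congr rfl (fun i _ => by rw [Nat.cast_mul, mul_pow])
          _ = ((k-1:ℕ):ℤ)^2 * ((r f0 : ℕ):ℤ) := by rw [hf0sq, Finset.mul_sum]
          _ = (((k-1:ℕ)):ℤ)^2 * (r0 : ℤ) := by rw [hrf0]
      rw [hA, hB, Nat.cast_mul]
      ring
    -- derive contradiction
    have hall : ∀ i : Fin m, ∀ f ∈ T', ∀ f' ∈ T', ((f i : ℤ) - (f' i : ℤ))^2 = 0 := by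
      have hnn1 : ∀ i ∈ (Finset.univ : Finset (Fin m)),
          (0:ℤ) ≤ ∑ f ∈ T', ∑ f' ∈ T', ((f i : ℤ) - (f' i : ℤ))^2 := by
        intro i _; positivity
      have h1 := (Finset.sum_eq_zero_iff_of_nonneg hnn1).mp hvar
      intro i f hf f' hf'
      have hnn2 : ∀ f ∈ T', (0:ℤ) ≤ ∑ f' ∈ T', ((f i : ℤ) - (f' i : ℤ))^2 := by
        intro f _; positivity
      have h2 := (Finset.sum_eq_zero_iff_of_nonneg hnn2).mp (h1 i (Finset.mem_univ i)) f hf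
      have hnn3 : ∀ f' ∈ T', (0:ℤ) ≤ ((f i : ℤ) - (f' i : ℤ))^2 := by
        intro f' _; positivity
      exact (Finset.sum_eq_zero_iff_of_nonneg hnn3).mp h2 f' hf'
    have h2card : 1 < T'.card := by rw [hcardT']; exact Nat.le_sub_of_add_le hk3
    obtain ⟨a, haT, c, hcT, hac⟩ := Finset.one_lt_card.mp h2card
    apply hac
    funext i
    have := hall i a haT c hcT
    have h0 : ((a i : ℕ) : ℤ) = ((c i : ℕ) : ℤ) := by
      have := pow_eq_zero_iff (n := 2) two_ne_zero |>.mp this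
      linarith [this]
    exact Fin.val_injective (by exact_mod_cast h0)
  · -- cardinality
    have hcardA : (S.image φ).card = S.card :=
      Finset.card_image_of_injOn (fun f _ f' _ h => hinj f f' h)
    rw [hcardA]
    have hcount : s ^ m = ∑ v ∈ R, (Finset.univ.filter (fun f => r f = v)).card := by
      rw [← Finset.card_eq_sum_card_fiberwise
        (fun x _ => Finset.mem_image_of_mem r (Finset.mem_univ x))]
      simp [Fintype.card_fun]
    have hle : ∑ v ∈ R, (Finset.univ.filter (fun f => r f = v)).card ≤ R.card * S.card := by
      calc ∑ v ∈ R, (Finset.univ.filter (fun f => r f = v)).card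
          ≤ R.card • S.card := Finset.sum_le_card_nsmul _ _ _ (fun v hv => hmax v hv)
        _ = R.card * S.card := by rw [smul_eq_mul]
    have hRcard : R.card ≤ m * (s-1)^2 + 1 := by
      calc R.card ≤ (Finset.range (m*(s-1)^2+1)).card := Finset.card_le_card (by
        intro v hv
        obtain ⟨f, _, rfl⟩ := Finset.mem_image.mp hv
        rw [Finset.mem_range]
        exact Nat.lt_succ_of_le (hr_le f))
      _ = m * (s-1)^2 + 1 := Finset.card_range _
    calc s ^ m = ∑ v ∈ R, (Finset.univ.filter (fun f => r f = v)).card := hcount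
      _ ≤ R.card * S.card := hle
      _ ≤ (m * (s-1)^2 + 1) * S.card := Nat.mul_le_mul_right _ hRcard

set_option maxHeartbeats 1000000 in
theorem BO_behrend_lower_bound (n k : ℕ) [NeZero n] (hn : 6 ≤ n)
    (hk3 : 3 ≤ k) (hkn : k ≤ n - 3) :
    ∀ m : ℕ, 0 < m →
      (1 / (m : ℝ)) * ((((n : ℝ) / k) ^ ((1 : ℝ) / m) - k) / (k - 1)) ^ (m - 2) ≤
        (BO k (ZMod n) : ℝ) := by
  intro m hm
  have hkn' : k + 3 ≤ n := by omega
  have hk0R : (0:ℝ) < k := by positivity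
  have hnk1 : (1:ℝ) ≤ (n:ℝ)/k := by
    rw [le_div_iff₀ hk0R]; norm_num
    exact_mod_cast (by omega : k ≤ n)
  set q' : ℝ := ((n:ℝ)/k) ^ ((1:ℝ)/m) with hq'
  have hq'1 : 1 ≤ q' := Real.one_le_rpow hnk1 (by positivity)
  set q : ℕ := ⌊q'⌋₊ with hqdef
  have hq1 : 1 ≤ q := Nat.le_floor (by exact_mod_cast hq'1)
  have hqle : (q:ℝ) ≤ q' := Nat.floor_le (by linarith)
  have hq'lt : q' < q + 1 := Nat.lt_floor_add_one q'
  -- k * q^m ≤ n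
  have hq'pow : q' ^ (m:ℕ) = (n:ℝ)/k := by
    rw [hq', ← Real.rpow_natCast (((n:ℝ)/k) ^ ((1:ℝ)/m)) m, ← Real.rpow_mul (by positivity),
      one_div_mul_cancel (by exact_mod_cast hm.ne' : (m:ℝ) ≠ 0), Real.rpow_one]
  have hqmR : (k:ℝ) * (q:ℝ)^m ≤ n := by
    have h1 : (q:ℝ)^m ≤ q'^m := pow_le_pow_left₀ (by positivity) hqle m
    rw [hq'pow] at h1
    calc (k:ℝ) * (q:ℝ)^m ≤ (k:ℝ) * ((n:ℝ)/k) := by nlinarith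
      _ = n := by field_simp
  have hqm : k * q^m ≤ n := by exact_mod_cast hqmR
  set s : ℕ := (q-1)/(k-1) + 1 with hsdef
  have hs1 : 1 ≤ s := Nat.le_add_left 1 _
  have hbq : (k-1)*(s-1)+1 ≤ q := by
    have h1 : (q-1)/(k-1) * (k-1) ≤ q - 1 := Nat.div_mul_le_self _ _
    have h2 : (k-1)*(s-1) = (q-1)/(k-1) * (k-1) := by
      rw [hsdef]; simp [Nat.mul_comm]
    omega
  have hbn : k * ((k-1)*(s-1)+1) ^ m ≤ n :=
    le_trans (Nat.mul_le_mul_left _ (Nat.pow_le_pow_left hbq m)) hqm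
  have hqks : q ≤ (k-1)*s := by
    have h1 := Nat.div_add_mod (q-1) (k-1)
    have h2 : (q-1) % (k-1) < k-1 := Nat.mod_lt _ (by omega)
    have h3 : (k-1)*s = (k-1)*((q-1)/(k-1)) + (k-1)*1 := by
      rw [hsdef, Nat.mul_add]
    omega
  obtain ⟨A, hfree, hpig⟩ := behrend_construction n k m s hk3 hm hs1 hbn
  have hBO : A.card < BO k (ZMod n) := lt_BO A hfree
  have ht : 0 < A.card := by
    rcases Nat.eq_zero_or_pos A.card with h|h
    · rw [h, Nat.mul_zero] at hpig
      have := Nat.one_le_pow m s (by omega)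
      omega
    · exact h
  -- real bounds
  have hk1R : (2:ℝ) ≤ (k:ℝ) - 1 := by
    have : (3:ℝ) ≤ k := by exact_mod_cast hk3
    linarith
  have hsR : (1:ℝ) ≤ (s:ℝ) := by exact_mod_cast hs1
  have hqksR : (q:ℝ) ≤ ((k:ℝ)-1) * s := by
    have h1 : ((q:ℕ):ℝ) ≤ (((k-1)*s : ℕ):ℝ) := Nat.cast_le.mpr hqks
    rw [Nat.cast_mul, Nat.cast_sub (by omega : 1 ≤ k)] at h1
    exact_mod_cast h1
  set base : ℝ := (q' - k)/((k:ℝ)-1) with hbase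
  have habs : |base| ≤ (s:ℝ) := by
    rw [hbase, abs_div, abs_of_pos (by linarith : (0:ℝ) < (k:ℝ)-1), div_le_iff₀ (by linarith)]
    rw [abs_le]
    have hk3R : (3:ℝ) ≤ (k:ℝ) := by exact_mod_cast hk3
    have hprod : ((k:ℝ)-1) ≤ (s:ℝ) * ((k:ℝ)-1) := by
      have := mul_le_mul_of_nonneg_right hsR (by linarith : (0:ℝ) ≤ (k:ℝ)-1)
      linarith [this]
    constructor
    · linarith
    · linarith [hq'lt, hqksR]
  have hpow : base ^ (m-2) ≤ (s:ℝ) ^ (m-2) := by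
    calc base ^ (m-2) ≤ |base ^ (m-2)| := le_abs_self _
      _ = |base| ^ (m-2) := abs_pow _ _
      _ ≤ (s:ℝ) ^ (m-2) := pow_le_pow_left₀ (abs_nonneg _) habs _
  have hfinal : (1/(m:ℝ)) * (s:ℝ) ^ (m-2) ≤ (A.card:ℝ) := by
    have htR : (1:ℝ) ≤ A.card := by exact_mod_cast ht
    rcases Nat.lt_or_ge m 2 with h2|h2
    · have hm1 : m = 1 := by omega
      subst hm1
      have he0 : (1:ℕ) - 2 = 0 := rfl
      rw [he0, pow_zero, mul_one, Nat.cast_one, div_one]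
      exact htR
    · set c : ℝ := ((m*(s-1)^2+1 : ℕ) : ℝ) with hc
      have hc0 : (0:ℝ) < c := by positivity
      have hpigR : (s:ℝ)^m ≤ c * A.card := by rw [hc]; exact_mod_cast hpig
      have hmR : (1:ℝ) ≤ m := by exact_mod_cast hm
      have hsub : ((s-1 : ℕ):ℝ) = (s:ℝ) - 1 := by
        rw [Nat.cast_sub hs1]; norm_num
      have hcval : c = m * ((s:ℝ)-1)^2 + 1 := by
        rw [hc]; push_cast [hsub]; ring
      have hsm : (s:ℝ)^m = (s:ℝ)^(m-2) * (s:ℝ)^2 := by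
        rw [← pow_add]; congr 1; omega
      have hinner : (m:ℝ) * ((s:ℝ)-1)^2 + 1 ≤ (m:ℝ) * (s:ℝ)^2 := by nlinarith
      have key : (s:ℝ)^(m-2) * c ≤ (m:ℝ) * (s:ℝ)^m := by
        rw [hcval, hsm]
        have hse : (0:ℝ) ≤ (s:ℝ)^(m-2) := by positivity
        nlinarith
      have h5 : (s:ℝ)^(m-2) * c ≤ ((m:ℝ) * A.card) * c := by
        calc (s:ℝ)^(m-2) * c ≤ (m:ℝ) * (s:ℝ)^m := key
          _ ≤ (m:ℝ) * (c * A.card) := by nlinarith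
          _ = ((m:ℝ) * A.card) * c := by ring
      have h6 : (s:ℝ)^(m-2) ≤ (m:ℝ) * A.card := le_of_mul_le_mul_right h5 hc0
      rw [one_div, inv_mul_le_iff₀ (by linarith : (0:ℝ) < (m:ℝ))]
      exact h6
  have hBOR : (A.card : ℝ) ≤ (BO k (ZMod n) : ℝ) := Nat.cast_le.mpr (le_of_lt hBO)
  calc (1 / (m : ℝ)) * base ^ (m - 2)
      ≤ (1/(m:ℝ)) * (s:ℝ) ^ (m-2) := by
        apply mul_le_mul_of_nonneg_left hpow
        positivity
    _ ≤ (A.card : ℝ) := hfinal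
    _ ≤ _ := hBOR
end
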